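/- arXiv:1305.4093 — 10 statements merged into one kernel-verified Lean document; each statement's English description precedes it below -/
import Mathlib

section
/- Let p be an odd prime, χ the Legendre symbol, and R the set of nonzero quadratic residues in F_p. Then for every nonzero x ∈ F_p, the number of pairs (a,b) ∈ R×R with b − a = x equals (p−3)/4 − (χ(x)/4)·(1 + χ(−1)). -/
open Finset

variable {p : ℕ} [Fact p.Prime]

lemma char_ne_two (hp : p ≠ 2) : ringChar (ZMod p) ≠ 2 := by
  rw [ZMod.ringChar_zmod_n]; exact hp

/-- shifted sum of quadratic character products -/
lemma sum_shift (hp : p ≠ 2) (x : ZMod p) (hx : x ≠ 0) :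
    ∑ a : ZMod p, quadraticChar (ZMod p) a * quadraticChar (ZMod p) (a + x) = -1 := by
  have h2 := char_ne_two hp
  classical
  have key : ∑ a : ZMod p, quadraticChar (ZMod p) a * quadraticChar (ZMod p) (a + x)
      = ∑ a ∈ univ.filter (· ≠ (0 : ZMod p)),
          quadraticChar (ZMod p) a * quadraticChar (ZMod p) (a + x) := by
    rw [sum_filter]
    refine Finset.sum_congr rfl fun a _ => ?_
    by_cases ha : a = 0
    · simp [ha]
    · simp [ha]
  rw [key]
  have step : ∀ a : ZMod p, a ≠ 0 →
      quadraticChar (ZMod p) a * quadraticChar (ZMod p) (a + x)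
        = quadraticChar (ZMod p) (1 + x * a⁻¹) := by
    intro a ha
    have : a * (a + x) = a ^ 2 * (1 + x * a⁻¹) := by
      field_simp
    rw [← map_mul, this, map_mul, quadraticChar_sq_one' ha, one_mul]
  rw [Finset.sum_congr rfl (fun a ha => step a (by simpa using ha))]
  have : ∑ a ∈ univ.filter (· ≠ (0 : ZMod p)), quadraticChar (ZMod p) (1 + x * a⁻¹)
      = ∑ b ∈ univ.filter (· ≠ (1 : ZMod p)), quadraticChar (ZMod p) b := by
    refine Finset.sum_nbij' (fun a => 1 + x * a⁻¹) (fun b => x * (b - 1)⁻¹) ?_ ?_ ?_ ?_ ?_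
    · intro a ha
      simp only [mem_filter, mem_univ, true_and] at ha ⊢
      intro h
      have : x * a⁻¹ = 0 := by linear_combination h
      rcases mul_eq_zero.mp this with h' | h'
      · exact hx h'
      · exact ha (inv_eq_zero.mp h')
    · intro b hb
      simp only [mem_filter, mem_univ, true_and] at hb ⊢
      intro h
      rcases mul_eq_zero.mp h with h' | h'
      · exact hx h'
      · exact hb (by have := inv_eq_zero.mp h'; linear_combination this)
    · intro a ha
      simp only [mem_filter, mem_univ, true_and] at ha
      field_simp
      simp [hx]
    · intro b hb
      simp only [mem_filter, mem_univ, true_and] at hb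
      have hb1 : b - 1 ≠ 0 := sub_ne_zero.mpr hb
      field_simp
      ring
    · intro a _; rfl
  rw [this]
  have := quadraticChar_sum_zero (F := ZMod p) h2
  have h1 : ∑ b ∈ univ.filter (· ≠ (1 : ZMod p)), quadraticChar (ZMod p) b
      = (∑ b : ZMod p, quadraticChar (ZMod p) b) - quadraticChar (ZMod p) 1 := by
    rw [Finset.filter_ne', Finset.sum_erase_eq_sub (mem_univ _)]
  rw [h1, this, map_one]
  ring

/-- For nonzero x, (R ∘ R)(x) = (p−3)/4 − (χ(x)/4)(1 + χ(−1)). -/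
theorem residues_correlation (p : ℕ) [Fact p.Prime] (hp : p ≠ 2) (x : ZMod p) (hx : x ≠ 0) :
    ((Finset.univ.filter (fun ab : ZMod p × ZMod p =>
        (ab.1 ≠ 0 ∧ ∃ y, y ^ 2 = ab.1) ∧ (ab.2 ≠ 0 ∧ ∃ y, y ^ 2 = ab.2)
          ∧ ab.2 - ab.1 = x)).card : ℝ)
      = ((p : ℝ) - 3) / 4
        - (((quadraticChar (ZMod p) x : ℤ) : ℝ) / 4)
            * (1 + ((quadraticChar (ZMod p) (-1) : ℤ) : ℝ)) := by
  classical
  have h2 : ringChar (ZMod p) ≠ 2 := char_ne_two hp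
  set χ := quadraticChar (ZMod p) with hχ
  -- predicate conversion
  have hpred : ∀ a : ZMod p, ((a ≠ 0 ∧ ∃ y, y ^ 2 = a) ↔ χ a = 1) := by
    intro a
    constructor
    · rintro ⟨ha, y, hy⟩
      rw [hχ, quadraticChar_one_iff_isSquare ha]
      exact ⟨y, by rw [← hy]; ring⟩
    · intro h
      have ha : a ≠ 0 := by
        intro h0; rw [hχ, h0, quadraticChar_zero] at h; exact one_ne_zero h.symm
      refine ⟨ha, ?_⟩
      rcases (quadraticChar_one_iff_isSquare ha).mp h with ⟨y, hy⟩
      exact ⟨y, by rw [hy]; ring⟩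
  -- card of pairs = card of a's
  set S := univ.filter (fun a : ZMod p => χ a = 1 ∧ χ (a + x) = 1) with hS
  have hcard : (univ.filter (fun ab : ZMod p × ZMod p =>
        (ab.1 ≠ 0 ∧ ∃ y, y ^ 2 = ab.1) ∧ (ab.2 ≠ 0 ∧ ∃ y, y ^ 2 = ab.2)
          ∧ ab.2 - ab.1 = x)).card = S.card := by
    refine Finset.card_nbij' (fun ab => ab.1) (fun a => (a, a + x)) ?_ ?_ ?_ ?_
    · rintro ⟨a, b⟩ hab
      simp only [Finset.mem_coe, mem_filter, mem_univ, true_and] at hab ⊢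
      obtain ⟨h1, h2', h3⟩ := hab
      have hb : b = a + x := by linear_combination h3
      simp only [hS, mem_filter, mem_univ, true_and]
      exact ⟨(hpred a).mp h1, by rw [← hb]; exact (hpred b).mp h2'⟩
    · intro a ha
      simp only [hS, Finset.mem_coe, mem_filter, mem_univ, true_and] at ha ⊢
      exact ⟨(hpred a).mpr ha.1, (hpred (a + x)).mpr ha.2, by ring⟩
    · rintro ⟨a, b⟩ hab
      simp only [Finset.mem_coe, mem_filter, mem_univ, true_and] at hab
      have hb : b = a + x := by linear_combination hab.2.2
      simp [hb]
    · intro a _; rfl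
  rw [hcard]
  -- main character sum identity
  have hsum1 : ∑ a : ZMod p, (1 + χ a) * (1 + χ (a + x)) = (p : ℤ) - 1 := by
    have e1 : ∀ a : ZMod p, (1 + χ a) * (1 + χ (a + x))
        = 1 + χ a + χ (a + x) + χ a * χ (a + x) := fun a => by ring
    rw [Finset.sum_congr rfl fun a _ => e1 a]
    rw [Finset.sum_add_distrib, Finset.sum_add_distrib, Finset.sum_add_distrib]
    have c1 : ∑ _a : ZMod p, (1 : ℤ) = (p : ℤ) := by
      simp [ZMod.card]
    have c2 : ∑ a : ZMod p, χ a = 0 := quadraticChar_sum_zero h2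
    have c3 : ∑ a : ZMod p, χ (a + x) = 0 := by
      rw [← c2]
      exact Fintype.sum_equiv (Equiv.addRight x) _ _ (fun a => rfl)
    have c4 : ∑ a : ZMod p, χ a * χ (a + x) = -1 := sum_shift hp x hx
    rw [c1, c2, c3, c4]
    ring
  -- split off a = 0 and a = -x
  have hne : (-x : ZMod p) ≠ 0 := neg_ne_zero.mpr hx
  have f0 : (1 + χ 0) * (1 + χ (0 + x)) = 1 + χ x := by
    rw [hχ]; simp [quadraticChar_zero]
  have fmx : (1 + χ (-x)) * (1 + χ (-x + x)) = 1 + χ (-x) := by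
    rw [hχ, neg_add_cancel]; simp [quadraticChar_zero]
  have hsplit : ∑ a : ZMod p, (1 + χ a) * (1 + χ (a + x))
      = (∑ a ∈ (univ.erase 0).erase (-x), (1 + χ a) * (1 + χ (a + x)))
        + (1 + χ x) + (1 + χ (-x)) := by
    conv_lhs => rw [← Finset.sum_erase_add univ _ (mem_univ (0 : ZMod p)),
      ← Finset.sum_erase_add (univ.erase 0) _ (Finset.mem_erase.mpr ⟨hne, mem_univ _⟩)]
    rw [f0, fmx]
    ring
  have hterm : ∀ a ∈ (univ.erase 0).erase (-x), (1 + χ a) * (1 + χ (a + x))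
      = if χ a = 1 ∧ χ (a + x) = 1 then 4 else 0 := by
    intro a ha
    simp only [mem_erase, mem_univ, and_true] at ha
    obtain ⟨hax, ha0⟩ := ha
    have h1 : a ≠ 0 := ha0
    have h2' : a + x ≠ 0 := by
      intro h; exact hax (by linear_combination h)
    rcases quadraticChar_dichotomy h1 with hA | hA <;>
      rcases quadraticChar_dichotomy h2' with hB | hB <;>
      simp [hχ] at hA hB ⊢ <;> rw [hA, hB] <;> norm_num
  have hfiltercard : ((univ.erase (0:ZMod p)).erase (-x)).filter
      (fun a => χ a = 1 ∧ χ (a + x) = 1) = S := by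
    rw [hS]
    ext a
    simp only [mem_filter, mem_erase, mem_univ, true_and, and_true]
    constructor
    · rintro ⟨_, h⟩; exact h
    · rintro ⟨h1, h2'⟩
      refine ⟨⟨?_, ?_⟩, h1, h2'⟩
      · intro h; rw [h] at h2'
        have : (-x + x : ZMod p) = 0 := by ring
        rw [this, hχ, quadraticChar_zero] at h2'
        exact one_ne_zero h2'.symm
      · intro h; rw [h, hχ, quadraticChar_zero] at h1
        exact one_ne_zero h1.symm
  have hsum2 : ∑ a ∈ (univ.erase (0:ZMod p)).erase (-x), (1 + χ a) * (1 + χ (a + x))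
      = 4 * (S.card : ℤ) := by
    rw [Finset.sum_congr rfl hterm, ← Finset.sum_filter, hfiltercard, Finset.sum_const,
      nsmul_eq_mul, mul_comm]
  have hneg : χ (-x) = χ (-1) * χ x := by
    rw [hχ, ← map_mul, neg_one_mul]
  have key : (4 : ℤ) * S.card = (p : ℤ) - 3 - χ x * (1 + χ (-1)) := by
    rw [hsplit, hsum2] at hsum1
    rw [hneg] at hsum1
    linarith
  have keyR := congrArg (fun n : ℤ => (n : ℝ)) key
  push_cast at keyR
  rw [hχ] at keyR
  linarith
end

section
/- Let p ≡ 3 (mod 4) be prime and R the set of nonzero quadratic residues in F_p. Then R is a perfect difference set: the number of pairs (a,b) ∈ R×R with b − a = x is the same constant (p−3)/4 for every nonzero x ∈ F_p. -/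
open Finset

private def Spds (p : ℕ) [Fact p.Prime] (x : ZMod p) : Finset (ZMod p × ZMod p) :=
  Finset.univ.filter (fun ab : ZMod p × ZMod p =>
        (ab.1 ≠ 0 ∧ ∃ y, y ^ 2 = ab.1) ∧ (ab.2 ≠ 0 ∧ ∃ y, y ^ 2 = ab.2)
          ∧ ab.2 - ab.1 = x)

private def Rpds (p : ℕ) [Fact p.Prime] : Finset (ZMod p) :=
  Finset.univ.filter (fun a : ZMod p => a ≠ 0 ∧ ∃ y, y ^ 2 = a)

variable {p : ℕ} [Fact p.Prime]

private lemma pds_two_ne_zero (hp : p % 4 = 3) : (2 : ZMod p) ≠ 0 := by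
  intro h
  have h2 : ((2 : ℕ) : ZMod p) = 0 := by push_cast; exact h
  have hdvd : p ∣ 2 := (ZMod.natCast_eq_zero_iff 2 p).mp h2
  have := Nat.le_of_dvd (by norm_num) hdvd
  omega

private lemma card_Rpds (hp : p % 4 = 3) : 2 * (Rpds p).card = p - 1 := by
  have h2 := pds_two_ne_zero hp
  have hcard : (Finset.univ.erase (0 : ZMod p)).card = p - 1 := by
    rw [Finset.card_erase_of_mem (Finset.mem_univ _), Finset.card_univ, ZMod.card]
  have hfib := Finset.card_eq_sum_card_fiberwise
    (f := fun y : ZMod p => y ^ 2) (s := Finset.univ.erase 0) (t := Rpds p) ?_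
  · rw [hcard] at hfib
    rw [hfib, Finset.sum_congr rfl (g := fun _ => 2), Finset.sum_const, smul_eq_mul, mul_comm]
    intro a ha
    simp only [Rpds, Finset.mem_filter] at ha
    obtain ⟨-, ha0, y₀, hy₀⟩ := ha
    have hy0 : y₀ ≠ 0 := by rintro rfl; simp at hy₀; exact ha0 hy₀.symm
    have hset : (Finset.univ.erase (0:ZMod p)).filter (fun y => y ^ 2 = a) = {y₀, -y₀} := by
      ext y
      simp only [Finset.mem_filter, Finset.mem_erase, Finset.mem_univ, and_true,
        Finset.mem_insert, Finset.mem_singleton, ← hy₀, sq_eq_sq_iff_eq_or_eq_neg]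
      constructor
      · rintro ⟨-, h⟩; exact h
      · rintro (rfl | rfl) <;> simp [hy0]
    rw [hset, Finset.card_pair]
    intro h
    have hzz : (2 : ZMod p) * y₀ = 0 := by linear_combination h
    rcases mul_eq_zero.mp hzz with h' | h'
    · exact h2 h'
    · exact hy0 h'
  · intro y hy
    have hy : y ≠ 0 := (Finset.mem_erase.mp hy).1
    show y ^ 2 ∈ Rpds p
    simp only [Rpds, Finset.mem_filter, Finset.mem_univ, true_and]
    exact ⟨pow_ne_zero _ hy, y, rfl⟩

private lemma Spds_scale {c x : ZMod p} (hc : c ≠ 0) (hsq : ∃ y, y ^ 2 = c) :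
    (Spds p (c * x)).card = (Spds p x).card := by
  obtain ⟨y, hy⟩ := hsq
  have hy0 : y ≠ 0 := by rintro rfl; simp at hy; exact hc hy.symm
  refine Finset.card_nbij' (fun ab => (c⁻¹ * ab.1, c⁻¹ * ab.2))
    (fun ab => (c * ab.1, c * ab.2)) ?_ ?_ ?_ ?_
  · rintro ⟨a, b⟩ hab
    change (a, b) ∈ Spds p (c * x) at hab
    show (c⁻¹ * a, c⁻¹ * b) ∈ Spds p x
    simp only [Spds, Finset.mem_filter, Finset.mem_univ, true_and] at hab ⊢
    obtain ⟨⟨ha0, za, hza⟩, ⟨hb0, zb, hzb⟩, hd⟩ := hab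
    refine ⟨⟨mul_ne_zero (inv_ne_zero hc) ha0, y⁻¹ * za, by rw [mul_pow, hza, inv_pow, hy]⟩,
      ⟨mul_ne_zero (inv_ne_zero hc) hb0, y⁻¹ * zb, by rw [mul_pow, hzb, inv_pow, hy]⟩, ?_⟩
    rw [← mul_sub, hd, ← mul_assoc, inv_mul_cancel₀ hc, one_mul]
  · rintro ⟨a, b⟩ hab
    change (a, b) ∈ Spds p x at hab
    show (c * a, c * b) ∈ Spds p (c * x)
    simp only [Spds, Finset.mem_filter, Finset.mem_univ, true_and] at hab ⊢
    obtain ⟨⟨ha0, za, hza⟩, ⟨hb0, zb, hzb⟩, hd⟩ := hab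
    refine ⟨⟨mul_ne_zero hc ha0, y * za, by rw [mul_pow, hza, hy]⟩,
      ⟨mul_ne_zero hc hb0, y * zb, by rw [mul_pow, hzb, hy]⟩, ?_⟩
    rw [← mul_sub, hd]
  · rintro ⟨a, b⟩ -
    simp only [← mul_assoc, mul_inv_cancel₀ hc, one_mul]
  · rintro ⟨a, b⟩ -
    simp only [← mul_assoc, inv_mul_cancel₀ hc, one_mul]

private lemma Spds_neg (x : ZMod p) : (Spds p (-x)).card = (Spds p x).card := by
  refine Finset.card_nbij' (fun ab => (ab.2, ab.1)) (fun ab => (ab.2, ab.1)) ?_ ?_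
    (fun a _ => rfl) (fun a _ => rfl)
  · rintro ⟨a, b⟩ hab
    change (a, b) ∈ Spds p (-x) at hab
    show (b, a) ∈ Spds p x
    simp only [Spds, Finset.mem_filter, Finset.mem_univ, true_and] at hab ⊢
    obtain ⟨h1, h2, hd⟩ := hab
    exact ⟨h2, h1, by rw [← neg_sub, hd, neg_neg]⟩
  · rintro ⟨a, b⟩ hab
    change (a, b) ∈ Spds p x at hab
    show (b, a) ∈ Spds p (-x)
    simp only [Spds, Finset.mem_filter, Finset.mem_univ, true_and] at hab ⊢
    obtain ⟨h1, h2, hd⟩ := hab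
    exact ⟨h2, h1, by rw [← neg_sub, hd]⟩

private lemma Spds_const (hp : p % 4 = 3) {x z : ZMod p} (hx : x ≠ 0) (hz : z ≠ 0) :
    (Spds p z).card = (Spds p x).card := by
  set c := z * x⁻¹ with hc
  have hc0 : c ≠ 0 := mul_ne_zero hz (inv_ne_zero hx)
  have hcx : c * x = z := by rw [hc, mul_assoc, inv_mul_cancel₀ hx, mul_one]
  by_cases hsq : IsSquare c
  · obtain ⟨r, hr⟩ := hsq
    rw [← hcx]
    exact Spds_scale hc0 ⟨r, by rw [sq]; exact hr.symm⟩
  · have hns1 : ¬ IsSquare (-1 : ZMod p) := by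
      rw [ZMod.exists_sq_eq_neg_one_iff]; simp [hp]
    have hsqnc : IsSquare (-c) := by
      have h1 := quadraticChar_neg_one_iff_not_isSquare.mpr hns1
      have h2 := quadraticChar_neg_one_iff_not_isSquare.mpr hsq
      have hval : quadraticChar (ZMod p) (-c) = 1 := by
        rw [show (-c) = (-1) * c by ring, map_mul, h1, h2]; ring
      exact (quadraticChar_one_iff_isSquare (neg_ne_zero.mpr hc0)).mp hval
    obtain ⟨r, hr⟩ := hsqnc
    have hncx : (-c) * x = -z := by rw [show (-c) * x = -(c * x) by ring, hcx]
    calc (Spds p z).card = (Spds p (-z)).card := (Spds_neg z).symm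
      _ = (Spds p ((-c) * x)).card := by rw [hncx]
      _ = (Spds p x).card := Spds_scale (neg_ne_zero.mpr hc0) ⟨r, by rw [sq]; exact hr.symm⟩

private lemma Spds_sum (hp : p % 4 = 3) :
    (∑ z ∈ Finset.univ.erase (0 : ZMod p), (Spds p z).card) + (Rpds p).card
      = (Rpds p).card * (Rpds p).card := by
  classical
  set T : Finset (ZMod p × ZMod p) :=
    (Rpds p ×ˢ Rpds p).filter (fun ab => ab.2 - ab.1 ≠ 0) with hT
  have hfib : T.card = ∑ z ∈ Finset.univ.erase (0 : ZMod p),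
      (T.filter (fun ab => ab.2 - ab.1 = z)).card := by
    refine Finset.card_eq_sum_card_fiberwise ?_
    rintro ⟨a, b⟩ hab
    change (a, b) ∈ T at hab
    simp only [hT, Finset.mem_filter] at hab
    exact Finset.mem_erase.mpr ⟨hab.2, Finset.mem_univ _⟩
  have hTz : ∀ z : ZMod p, z ≠ 0 →
      T.filter (fun ab => ab.2 - ab.1 = z) = Spds p z := by
    intro z hz
    ext ⟨a, b⟩
    simp only [hT, Spds, Rpds, Finset.mem_filter, Finset.mem_product, Finset.mem_univ, true_and]
    constructor
    · rintro ⟨⟨⟨h1, h2⟩, -⟩, hd⟩; exact ⟨h1, h2, hd⟩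
    · rintro ⟨h1, h2, hd⟩; exact ⟨⟨⟨h1, h2⟩, by rw [hd]; exact hz⟩, hd⟩
  have hsum : T.card = ∑ z ∈ Finset.univ.erase (0 : ZMod p), (Spds p z).card := by
    rw [hfib]
    refine Finset.sum_congr rfl fun z hz => ?_
    rw [hTz z (Finset.mem_erase.mp hz).1]
  have hdiag : ((Rpds p ×ˢ Rpds p).filter (fun ab => ab.2 - ab.1 = 0)).card = (Rpds p).card := by
    refine Finset.card_nbij' (fun ab => ab.1) (fun a => (a, a)) ?_ ?_ ?_ (fun a _ => rfl)
    · rintro ⟨a, b⟩ hab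
      change (a, b) ∈ (Rpds p ×ˢ Rpds p).filter (fun ab : ZMod p × ZMod p => ab.2 - ab.1 = 0) at hab
      simp only [Finset.mem_filter, Finset.mem_product] at hab
      exact hab.1.1
    · intro a ha
      show (a, a) ∈ (Rpds p ×ˢ Rpds p).filter (fun ab : ZMod p × ZMod p => ab.2 - ab.1 = 0)
      simp only [Finset.mem_filter, Finset.mem_product, sub_self, and_true]
      exact ⟨ha, ha⟩
    · rintro ⟨a, b⟩ hab
      change (a, b) ∈ (Rpds p ×ˢ Rpds p).filter (fun ab : ZMod p × ZMod p => ab.2 - ab.1 = 0) at hab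
      simp only [Finset.mem_filter, Finset.mem_product] at hab
      have hba : b = a := sub_eq_zero.mp hab.2
      simp [hba]
  have hsplit := Finset.card_filter_add_card_filter_not
    (s := Rpds p ×ˢ Rpds p) (p := fun ab => ab.2 - ab.1 = 0)
  have hTT : Finset.filter (fun ab => ¬ (ab.2 - ab.1 = 0)) (Rpds p ×ˢ Rpds p) = T := rfl
  rw [hTT, hdiag] at hsplit
  rw [← hsum, ← Finset.card_product (Rpds p) (Rpds p)]
  omega

/-- If p ≡ 3 mod 4, the quadratic residues form a perfect difference set:
(R ∘ R)(x) = (p−3)/4 for all nonzero x. -/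
theorem residues_perfect_difference_set (p : ℕ) [Fact p.Prime] (hp : p % 4 = 3)
    (x : ZMod p) (hx : x ≠ 0) :
    ((Finset.univ.filter (fun ab : ZMod p × ZMod p =>
        (ab.1 ≠ 0 ∧ ∃ y, y ^ 2 = ab.1) ∧ (ab.2 ≠ 0 ∧ ∃ y, y ^ 2 = ab.2)
          ∧ ab.2 - ab.1 = x)).card : ℝ)
      = ((p : ℝ) - 3) / 4 := by
  have hp3 : 3 ≤ p := by
    by_contra h
    interval_cases p <;> omega
  have hsum := Spds_sum (p := p) hp
  have hconst : ∀ z ∈ Finset.univ.erase (0 : ZMod p), (Spds p z).card = (Spds p x).card :=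
    fun z hz => Spds_const hp hx (Finset.mem_erase.mp hz).1
  rw [Finset.sum_congr rfl hconst, Finset.sum_const, smul_eq_mul,
    Finset.card_erase_of_mem (Finset.mem_univ _), Finset.card_univ, ZMod.card] at hsum
  have hR := card_Rpds (p := p) hp
  show ((Spds p x).card : ℝ) = ((p : ℝ) - 3) / 4
  set N : ℕ := (Spds p x).card
  set R : ℕ := (Rpds p).card
  have h1 : ((p : ℝ) - 1) * N + R = R * R := by
    have hc := congrArg (Nat.cast : ℕ → ℝ) hsum
    push_cast [Nat.cast_sub (by omega : 1 ≤ p)] at hc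
    linarith [hc]
  have h2 : 2 * (R : ℝ) = (p : ℝ) - 1 := by
    have hc := congrArg (Nat.cast : ℕ → ℝ) hR
    push_cast [Nat.cast_sub (by omega : 1 ≤ p)] at hc
    linarith [hc]
  have hpne : (p : ℝ) - 1 ≠ 0 := by
    have : (3 : ℝ) ≤ p := by exact_mod_cast hp3
    linarith
  have key : ((p : ℝ) - 1) * N = ((p : ℝ) - 1) * (((p : ℝ) - 3) / 4) := by nlinarith [h1, h2]
  exact mul_left_cancel₀ hpne key
end

section
/- For any complex-valued functions g, h on F_p and the Legendre symbol χ (p odd prime), |Σ_{x,y∈F_p} g(x)·h(y)·χ(x+y)| ≤ ‖g‖₂ · (p·‖h‖₂² − |Σ_x h(x)|²)^{1/2}, where ‖f‖₂² = Σ_x |f(x)|². -/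
open Finset

lemma key (p : ℕ) [Fact p.Prime] (hp : p ≠ 2) (b : ZMod p) :
    ∑ x : ZMod p, (quadraticChar (ZMod p) x : ℤ) * quadraticChar (ZMod p) (x + b)
      = if b = 0 then (p - 1 : ℤ) else -1 := by
  have hchar : ringChar (ZMod p) ≠ 2 := by
    rw [ZMod.ringChar_zmod_n]; exact hp
  split_ifs with hb
  · subst hb
    have : ∀ x : ZMod p, (quadraticChar (ZMod p) x : ℤ) * quadraticChar (ZMod p) (x + 0)
        = if x = 0 then 0 else 1 := by
      intro x
      rw [add_zero]
      by_cases hx : x = 0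
      · simp [hx]
      · rw [if_neg hx, ← pow_two]; exact_mod_cast quadraticChar_sq_one hx
    rw [Finset.sum_congr rfl fun x _ => this x]
    rw [Finset.sum_ite, Finset.sum_const, Finset.sum_const, Finset.filter_ne']
    simp [Finset.card_erase_of_mem, ZMod.card]
    rw [Nat.cast_sub (Fact.out : p.Prime).one_lt.le]
    norm_num
  · -- split off x = 0
    have h0 : (0 : ZMod p) ∈ (univ : Finset (ZMod p)) := mem_univ _
    rw [← Finset.add_sum_erase _ _ h0]
    rw [quadraticChar_zero]
    rw [zero_mul, zero_add]
    have step : ∀ x ∈ (univ : Finset (ZMod p)).erase 0,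
        (quadraticChar (ZMod p) x : ℤ) * quadraticChar (ZMod p) (x + b)
        = (quadraticChar (ZMod p) (1 + b * x⁻¹) : ℤ) := by
      intro x hx
      have hx0 : x ≠ 0 := (Finset.mem_erase.mp hx).1
      have : x + b = x * (1 + b * x⁻¹) := by field_simp
      rw [this, map_mul, ← mul_assoc]
      rw [← pow_two]
      rw [show (quadraticChar (ZMod p) x : ℤ) ^ 2 = 1 by exact_mod_cast quadraticChar_sq_one hx0]
      rw [one_mul]
    rw [Finset.sum_congr rfl step]
    have hbij : ∑ x ∈ (univ : Finset (ZMod p)).erase 0,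
        (quadraticChar (ZMod p) (1 + b * x⁻¹) : ℤ)
        = ∑ u ∈ (univ : Finset (ZMod p)).erase 1, (quadraticChar (ZMod p) u : ℤ) := by
      apply Finset.sum_nbij' (fun x => 1 + b * x⁻¹) (fun u => b * (u - 1)⁻¹)
      · intro x hx
        have hx0 : x ≠ 0 := (Finset.mem_erase.mp hx).1
        simp only [mem_erase, mem_univ, and_true]
        intro hcon
        have : b * x⁻¹ = 0 := by linear_combination hcon
        rcases mul_eq_zero.mp this with h | h
        · exact hb h
        · exact hx0 (inv_eq_zero.mp h)
      · intro u hu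
        have hu1 : u ≠ 1 := (Finset.mem_erase.mp hu).1
        simp only [mem_erase, mem_univ, and_true]
        intro hcon
        rcases mul_eq_zero.mp hcon with h | h
        · exact hb h
        · exact hu1 (by
            have := inv_eq_zero.mp h
            linear_combination this)
      · intro x hx
        have hx0 : x ≠ 0 := (Finset.mem_erase.mp hx).1
        field_simp
        rw [add_sub_cancel_left]; exact div_self hb
      · intro u hu
        have hu1 : u ≠ 1 := (Finset.mem_erase.mp hu).1
        have hu1' : u - 1 ≠ 0 := sub_ne_zero.mpr hu1
        field_simp
        ring
      · intro x hx
        rfl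
    rw [hbij]
    have hsum : ∑ u : ZMod p, (quadraticChar (ZMod p) u : ℤ) = 0 :=
      quadraticChar_sum_zero hchar
    rw [Finset.sum_erase_eq_sub (mem_univ (1 : ZMod p)), hsum, map_one]
    ring

/-- |Σ_{x,y} g(x)h(y)χ(x+y)| ≤ ‖g‖₂ (p‖h‖₂² − |⟨h⟩|²)^{1/2}. -/
theorem bilinear_char_sum_bound (p : ℕ) [Fact p.Prime] (hp : p ≠ 2) (g h : ZMod p → ℂ) :
    ‖(∑ x : ZMod p, ∑ y : ZMod p,
        g x * h y * ((quadraticChar (ZMod p) (x + y) : ℤ) : ℂ))‖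
      ≤ Real.sqrt (∑ x : ZMod p, ‖(g x)‖ ^ 2) *
          Real.sqrt (p * ∑ x : ZMod p, ‖(h x)‖ ^ 2
            - ‖(∑ x : ZMod p, h x)‖ ^ 2) := by
  set χc : ZMod p → ℂ := fun a => ((quadraticChar (ZMod p) a : ℤ) : ℂ) with hχc
  set F : ZMod p → ℂ := fun x => ∑ y : ZMod p, h y * χc (x + y) with hFdef
  -- Step A: character sum in ℂ
  have stepA : ∀ y y' : ZMod p, ∑ x : ZMod p, χc (x + y) * χc (x + y')
      = if y = y' then ((p : ℂ) - 1) else -1 := by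
    intro y y'
    have := key p hp (y' - y)
    have hsub : ∑ x : ZMod p, χc (x + y) * χc (x + y')
        = ∑ t : ZMod p, χc t * χc (t + (y' - y)) := by
      apply Fintype.sum_equiv (Equiv.addRight y)
      intro x
      simp only [Equiv.coe_addRight]
      ring_nf
    rw [hsub]
    have : ∑ t : ZMod p, χc t * χc (t + (y' - y))
        = ((∑ x : ZMod p, (quadraticChar (ZMod p) x : ℤ) * quadraticChar (ZMod p) (x + (y' - y)) : ℤ) : ℂ) := by
      push_cast [hχc]; rfl
    rw [this, key p hp (y' - y)]
    by_cases hyy : y = y'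
    · simp [hyy, sub_eq_zero]
    · rw [if_neg (fun hc => hyy (by linear_combination -hc)), if_neg hyy]
      norm_num
  -- conj of χc is χc
  have hconjχ : ∀ a, (starRingEnd ℂ) (χc a) = χc a := by
    intro a; simp [hχc]
  -- Step B: ∑ normSq (F x) = p * ∑ normSq h - normSq (∑ h)
  have stepB : (∑ x : ZMod p, Complex.normSq (F x))
      = p * ∑ y : ZMod p, Complex.normSq (h y) - Complex.normSq (∑ y : ZMod p, h y) := by
    apply Complex.ofReal_injective
    push_cast [← Complex.mul_conj]
    calc ∑ x : ZMod p, F x * (starRingEnd ℂ) (F x)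
        = ∑ x : ZMod p, ∑ y : ZMod p, ∑ y' : ZMod p,
            (h y * (starRingEnd ℂ) (h y')) * (χc (x + y) * χc (x + y')) := by
          apply Finset.sum_congr rfl; intro x _
          rw [hFdef]
          rw [map_sum, Finset.sum_mul_sum]
          apply Finset.sum_congr rfl; intro y _
          apply Finset.sum_congr rfl; intro y' _
          rw [map_mul, hconjχ]; ring
      _ = ∑ y : ZMod p, ∑ y' : ZMod p,
            (h y * (starRingEnd ℂ) (h y')) * ∑ x : ZMod p, (χc (x + y) * χc (x + y')) := by
          rw [Finset.sum_comm]
          apply Finset.sum_congr rfl; intro y _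
          rw [Finset.sum_comm]
          apply Finset.sum_congr rfl; intro y' _
          rw [Finset.mul_sum]
      _ = ∑ y : ZMod p, ∑ y' : ZMod p,
            ((if y = y' then (h y * (starRingEnd ℂ) (h y')) * p else 0)
              - h y * (starRingEnd ℂ) (h y')) := by
          apply Finset.sum_congr rfl; intro y _
          apply Finset.sum_congr rfl; intro y' _
          rw [stepA y y']
          split_ifs with hyy <;> ring
      _ = (p : ℂ) * ∑ y : ZMod p, h y * (starRingEnd ℂ) (h y)
            - (∑ y : ZMod p, h y) * (starRingEnd ℂ) (∑ y : ZMod p, h y) := by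
          rw [Finset.sum_congr rfl (fun y _ => Finset.sum_sub_distrib _ _)]
          rw [Finset.sum_sub_distrib]
          congr 1
          · rw [Finset.mul_sum]
            apply Finset.sum_congr rfl; intro y _
            rw [Finset.sum_ite_eq Finset.univ y (fun y' => h y * (starRingEnd ℂ) (h y') * p)]
            simp; ring
          · rw [map_sum, Finset.sum_mul_sum]
  -- rewrite LHS as ∑ x, g x * F x
  have hLHS : ∑ x : ZMod p, ∑ y : ZMod p, g x * h y * χc (x + y)
      = ∑ x : ZMod p, g x * F x := by
    apply Finset.sum_congr rfl; intro x _
    rw [hFdef, Finset.mul_sum]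
    apply Finset.sum_congr rfl; intro y _; ring
  calc ‖(∑ x : ZMod p, ∑ y : ZMod p, g x * h y * χc (x + y))‖
      = ‖(∑ x : ZMod p, g x * F x)‖ := by rw [hLHS]
    _ ≤ ∑ x : ZMod p, ‖(g x)‖ * ‖(F x)‖ := by
        refine (norm_sum_le _ _).trans ?_
        apply Finset.sum_le_sum; intro x _
        rw [norm_mul]
    _ ≤ Real.sqrt (∑ x : ZMod p, ‖(g x)‖ ^ 2) *
          Real.sqrt (∑ x : ZMod p, ‖(F x)‖ ^ 2) :=
        Real.sum_mul_le_sqrt_mul_sqrt _ _ _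
    _ = Real.sqrt (∑ x : ZMod p, ‖(g x)‖ ^ 2) *
          Real.sqrt (p * ∑ x : ZMod p, ‖(h x)‖ ^ 2
            - ‖(∑ x : ZMod p, h x)‖ ^ 2) := by
        congr 1
        simp_rw [Complex.sq_norm]
        rw [stepB]
end

section
/- For any complex-valued functions g, h on F_p and the Legendre symbol χ (p odd prime), Σ_{x∈F_p} (g∘χ)(x)·conj((h∘χ)(x)) = p·Σ_x g(x)·conj(h(x)) − (Σ_x g(x))·conj(Σ_x h(x)), where (f∘χ)(x) := Σ_y f(y)·χ(y+x). -/
lemma shift_sum (p : ℕ) [Fact p.Prime] (hp : p ≠ 2) (c : ZMod p) (hc : c ≠ 0) :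
    ∑ t : ZMod p, quadraticChar (ZMod p) t * quadraticChar (ZMod p) (t + c) = -1 := by
  have hchar : ringChar (ZMod p) ≠ 2 := by
    rw [ZMod.ringChar_zmod_n]; exact hp
  set χ := quadraticChar (ZMod p) with hχ
  have h0 : ∑ t : ZMod p, χ t * χ (t + c)
      = ∑ t ∈ Finset.univ.erase (0 : ZMod p), χ t * χ (t + c) := by
    rw [Finset.sum_erase_eq_sub (Finset.mem_univ _)]
    simp [hχ]
  have h1 : ∑ t ∈ Finset.univ.erase (0 : ZMod p), χ t * χ (t + c)
      = ∑ u ∈ Finset.univ.erase (1 : ZMod p), χ u := by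
    apply Finset.sum_nbij' (fun t => 1 + c * t⁻¹) (fun u => c * (u - 1)⁻¹)
    · intro t ht
      simp only [Finset.mem_erase, Finset.mem_univ, and_true] at ht ⊢
      intro h
      have h2 : c * t⁻¹ = 0 := by linear_combination h
      rcases mul_eq_zero.mp h2 with h' | h'
      · exact hc h'
      · exact ht (by simpa using inv_eq_zero.mp h')
    · intro u hu
      simp only [Finset.mem_erase, Finset.mem_univ, and_true] at hu ⊢
      intro h
      rcases mul_eq_zero.mp h with h' | h'
      · exact hc h'
      · exact hu (by have := inv_eq_zero.mp h'; linear_combination this)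
    · intro t ht
      simp only [Finset.mem_erase, Finset.mem_univ, and_true] at ht
      field_simp
      simp [hc]
    · intro u hu
      simp only [Finset.mem_erase, Finset.mem_univ, and_true] at hu
      have h1 : u - 1 ≠ 0 := sub_ne_zero.mpr hu
      field_simp
      ring
    · intro t ht
      simp only [Finset.mem_erase, Finset.mem_univ, and_true] at ht
      have h2 : t + c = t * (1 + c * t⁻¹) := by field_simp
      rw [h2, map_mul, ← mul_assoc, ← map_mul]
      have h3 : t * t = t ^ 2 := by ring
      rw [h3, quadraticChar_sq_one' ht, one_mul]
  rw [h0, h1, Finset.sum_erase_eq_sub (Finset.mem_univ _), quadraticChar_sum_zero hchar]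
  simp [hχ]

lemma key_sum (p : ℕ) [Fact p.Prime] (hp : p ≠ 2) (a b : ZMod p) :
    ∑ x : ZMod p, quadraticChar (ZMod p) (a + x) * quadraticChar (ZMod p) (b + x)
      = if a = b then (p : ℤ) - 1 else -1 := by
  set χ := quadraticChar (ZMod p) with hχ
  have hre : ∑ x : ZMod p, χ (a + x) * χ (b + x)
      = ∑ t : ZMod p, χ t * χ (t + (b - a)) := by
    apply Fintype.sum_bijective (fun x => a + x) (Equiv.addLeft a).bijective
    intro x
    ring_nf
  rw [hre]
  split_ifs with hab
  · subst hab
    simp only [sub_self]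
    have : ∀ t : ZMod p, χ t * χ (t + 0) = if t = 0 then 0 else 1 := by
      intro t
      rw [add_zero]
      split_ifs with ht
      · simp [ht, hχ]
      · have := quadraticChar_sq_one (F := ZMod p) ht
        rw [← this]; ring
    rw [Finset.sum_congr rfl fun t _ => this t]
    rw [Finset.sum_ite, Finset.sum_const, Finset.sum_const]
    simp only [smul_zero, smul_eq_mul, mul_one, zero_add]
    have hcard : (Finset.univ.filter (fun t : ZMod p => ¬ t = 0)).card = p - 1 := by
      rw [Finset.filter_not, Finset.card_sdiff_of_subset (Finset.filter_subset _ _)]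
      simp [Finset.filter_eq', Finset.card_univ, ZMod.card]
    rw [hcard]
    have : 1 ≤ p := (Fact.out : p.Prime).one_lt.le.trans' (by norm_num)
    rw [nsmul_eq_mul, mul_one, Nat.cast_sub this]
    push_cast
    ring
  · exact shift_sum p hp (b - a) (sub_ne_zero.mpr (fun h => hab (by linear_combination -h)))

/-- Σ_x (g∘χ)(x) conj((h∘χ)(x)) = p⟨g,h⟩ − ⟨g⟩ conj(⟨h⟩). -/
theorem char_convolution_inner_product (p : ℕ) [Fact p.Prime] (hp : p ≠ 2)
    (g h : ZMod p → ℂ) :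
    ∑ x : ZMod p,
        (∑ y : ZMod p, g y * ((quadraticChar (ZMod p) (y + x) : ℤ) : ℂ))
          * (starRingEnd ℂ) (∑ y : ZMod p, h y * ((quadraticChar (ZMod p) (y + x) : ℤ) : ℂ))
      = p * (∑ x : ZMod p, g x * (starRingEnd ℂ) (h x))
        - (∑ x : ZMod p, g x) * (starRingEnd ℂ) (∑ x : ZMod p, h x) := by
  have key : ∀ y z : ZMod p,
      ∑ x : ZMod p, ((quadraticChar (ZMod p) (y + x) : ℤ) : ℂ)
          * ((quadraticChar (ZMod p) (z + x) : ℤ) : ℂ)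
        = if y = z then (p : ℂ) - 1 else -1 := by
    intro y z
    have hk := key_sum p hp y z
    have : ∑ x : ZMod p, ((quadraticChar (ZMod p) (y + x) : ℤ) : ℂ)
          * ((quadraticChar (ZMod p) (z + x) : ℤ) : ℂ)
        = ((∑ x : ZMod p, quadraticChar (ZMod p) (y + x) * quadraticChar (ZMod p) (z + x) : ℤ) : ℂ) := by
      push_cast; rfl
    rw [this, hk]
    split_ifs <;> push_cast <;> ring
  calc ∑ x : ZMod p,
        (∑ y : ZMod p, g y * ((quadraticChar (ZMod p) (y + x) : ℤ) : ℂ))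
          * (starRingEnd ℂ) (∑ y : ZMod p, h y * ((quadraticChar (ZMod p) (y + x) : ℤ) : ℂ))
      = ∑ x : ZMod p, ∑ y : ZMod p, ∑ z : ZMod p,
          (g y * ((quadraticChar (ZMod p) (y + x) : ℤ) : ℂ))
            * ((starRingEnd ℂ) (h z) * ((quadraticChar (ZMod p) (z + x) : ℤ) : ℂ)) := by
        refine Finset.sum_congr rfl fun x _ => ?_
        rw [map_sum, Finset.sum_mul_sum]
        refine Finset.sum_congr rfl fun y _ => Finset.sum_congr rfl fun z _ => ?_
        rw [map_mul, map_intCast]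
    _ = ∑ y : ZMod p, ∑ z : ZMod p, g y * (starRingEnd ℂ) (h z)
          * ∑ x : ZMod p, ((quadraticChar (ZMod p) (y + x) : ℤ) : ℂ)
              * ((quadraticChar (ZMod p) (z + x) : ℤ) : ℂ) := by
        rw [Finset.sum_comm]
        refine Finset.sum_congr rfl fun y _ => ?_
        rw [Finset.sum_comm]
        refine Finset.sum_congr rfl fun z _ => ?_
        rw [Finset.mul_sum]
        exact Finset.sum_congr rfl fun x _ => by ring
    _ = ∑ y : ZMod p, ∑ z : ZMod p, g y * (starRingEnd ℂ) (h z)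
          * ((if y = z then (p : ℂ) else 0) - 1) := by
        refine Finset.sum_congr rfl fun y _ => Finset.sum_congr rfl fun z _ => ?_
        rw [key y z]
        split_ifs <;> ring
    _ = p * (∑ x : ZMod p, g x * (starRingEnd ℂ) (h x))
        - (∑ x : ZMod p, g x) * (starRingEnd ℂ) (∑ x : ZMod p, h x) := by
        simp only [mul_sub, mul_one, Finset.sum_sub_distrib, mul_ite, mul_zero]
        rw [map_sum, Finset.sum_mul_sum, Finset.mul_sum]
        congr 1
        refine Finset.sum_congr rfl fun y _ => ?_
        rw [Finset.sum_ite_eq Finset.univ y]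
        simp [mul_comm]
end

section
/- Let c be an integer and ψ : G → ℤ a function on a finite abelian group G. Then Σ_x ψ(x)² ≥ c·|Σ_x ψ(x)| − (c−1)·|Σ_{x : 0 < |ψ(x)| < c} ψ(x)|. -/
/-- ‖ψ‖₂² ≥ c|Σψ| − (c−1)|Σ_{0<|ψ|<c} ψ|. -/
theorem l2_lower_bound (G : Type*) [Fintype G] (c : ℤ) (ψ : G → ℤ) :
    ∑ x : G, ψ x ^ 2
      ≥ c * |∑ x : G, ψ x|
        - (c - 1) * |∑ x ∈ Finset.univ.filter (fun x : G => 0 < |ψ x| ∧ |ψ x| < c), ψ x| := by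
  classical
  set p : G → Prop := fun x => 0 < |ψ x| ∧ |ψ x| < c with hp
  set A : Finset G := Finset.univ.filter p with hA
  have hsq : (0:ℤ) ≤ ∑ x : G, ψ x ^ 2 := Finset.sum_nonneg fun x _ => sq_nonneg _
  rcases le_or_gt c 0 with hc | hc
  · have hAe : A = ∅ := by
      rw [hA, Finset.filter_eq_empty_iff]
      intro x _ h
      exact absurd (h.2.trans_le hc) (not_lt.2 (abs_nonneg _))
    rw [hAe]
    simp only [Finset.sum_empty, abs_zero, mul_zero, sub_zero]
    have : c * |∑ x : G, ψ x| ≤ 0 := mul_nonpos_of_nonpos_of_nonneg hc (abs_nonneg _)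
    linarith
  · -- c > 0
    have hsplit : ∑ x ∈ A, ψ x + ∑ x ∈ Aᶜ, ψ x = ∑ x : G, ψ x := by
      rw [Finset.sum_add_sum_compl]
    have h1 : ∑ x ∈ A, |ψ x| ≤ ∑ x ∈ A, ψ x ^ 2 := by
      apply Finset.sum_le_sum
      intro x hx
      have hx' : 0 < |ψ x| := (Finset.mem_filter.1 hx).2.1
      have h1 : 1 ≤ |ψ x| := hx'
      calc |ψ x| = 1 * |ψ x| := (one_mul _).symm
        _ ≤ |ψ x| * |ψ x| := by apply mul_le_mul_of_nonneg_right h1 (abs_nonneg _)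
        _ = ψ x ^ 2 := by rw [sq]; exact abs_mul_abs_self _
    have h2 : ∑ x ∈ Aᶜ, c * |ψ x| ≤ ∑ x ∈ Aᶜ, ψ x ^ 2 := by
      apply Finset.sum_le_sum
      intro x hx
      have hx' : ¬ p x := by
        simpa [hA, p] using Finset.mem_compl.1 hx
      rcases le_or_gt (|ψ x|) 0 with h0 | h0
      · have : ψ x = 0 := abs_nonpos_iff.1 h0
        simp [this]
      · have hge : c ≤ |ψ x| := by
          by_contra hlt
          exact hx' ⟨h0, not_le.1 hlt⟩
        calc c * |ψ x| ≤ |ψ x| * |ψ x| := mul_le_mul_of_nonneg_right hge (abs_nonneg _)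
          _ = ψ x ^ 2 := by rw [sq]; exact abs_mul_abs_self _
    have h3 : |∑ x ∈ A, ψ x| ≤ ∑ x ∈ A, |ψ x| := Finset.abs_sum_le_sum_abs _ _
    have h4 : |∑ x ∈ Aᶜ, ψ x| ≤ ∑ x ∈ Aᶜ, |ψ x| := Finset.abs_sum_le_sum_abs _ _
    have h5 : |∑ x : G, ψ x| ≤ |∑ x ∈ A, ψ x| + |∑ x ∈ Aᶜ, ψ x| := by
      rw [← hsplit]; exact abs_add_le _ _
    have h6 : ∑ x ∈ Aᶜ, c * |ψ x| = c * ∑ x ∈ Aᶜ, |ψ x| := by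
      rw [Finset.mul_sum]
    have htot : ∑ x ∈ A, ψ x ^ 2 + ∑ x ∈ Aᶜ, ψ x ^ 2 = ∑ x : G, ψ x ^ 2 := by
      rw [Finset.sum_add_sum_compl]
    nlinarith [abs_nonneg (∑ x ∈ A, ψ x), abs_nonneg (∑ x ∈ Aᶜ, ψ x),
      mul_le_mul_of_nonneg_left h4 hc.le, mul_le_mul_of_nonneg_left h5 hc.le]
end

section
/- Let p be a prime and R ⊆ F_p the set of nonzero quadratic residues. If A ⊆ F_p satisfies A + A = R (where A + A = {a + a' : a, a' ∈ A}), then p = 3 and A = {2}. -/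
open Pointwise Finset

section Aux

variable {F : Type*} [Field F] [Fintype F] [DecidableEq F]

/-- Key character sum: `∑ x, χ(x(x+c)) = -1` for `c ≠ 0`. -/
lemma aux_sum_quadChar_shift (hF : ringChar F ≠ 2) {c : F} (hc : c ≠ 0) :
    ∑ x : F, quadraticChar F (x * (x + c)) = -1 := by
  have h0 : ∑ x : F, quadraticChar F (x * (x + c))
      = ∑ x ∈ (Finset.univ : Finset F).erase 0, quadraticChar F (1 + c * x⁻¹) := by
    rw [← Finset.sum_erase (Finset.univ : Finset F)
      (f := fun x => quadraticChar F (x * (x + c))) (a := 0) (by simp)]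
    refine Finset.sum_congr rfl fun x hx => ?_
    have hx0 : x ≠ 0 := Finset.ne_of_mem_erase hx
    have hxx : x * (x + c) = x ^ 2 * (1 + c * x⁻¹) := by field_simp
    rw [hxx, map_mul, quadraticChar_sq_one' hx0, one_mul]
  rw [h0]
  have h1 : ∑ x ∈ (Finset.univ : Finset F).erase 0, quadraticChar F (1 + c * x⁻¹)
      = ∑ u ∈ (Finset.univ : Finset F).erase 1, quadraticChar F u := by
    refine Finset.sum_nbij' (fun x => 1 + c * x⁻¹) (fun u => c * (u - 1)⁻¹) ?_ ?_ ?_ ?_ ?_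
    · intro x hx
      have hx0 : x ≠ 0 := Finset.ne_of_mem_erase hx
      refine Finset.mem_erase.mpr ⟨?_, Finset.mem_univ _⟩
      intro hcon
      have : c * x⁻¹ = 0 := by linear_combination hcon
      exact hc (by simpa [hx0] using this)
    · intro u hu
      have hu1 : u ≠ 1 := Finset.ne_of_mem_erase hu
      refine Finset.mem_erase.mpr ⟨?_, Finset.mem_univ _⟩
      have : u - 1 ≠ 0 := sub_ne_zero.mpr hu1
      exact mul_ne_zero hc (inv_ne_zero this)
    · intro x hx
      have hx0 : x ≠ 0 := Finset.ne_of_mem_erase hx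
      field_simp
      simp [hc]
    · intro u hu
      have hu1 : u - 1 ≠ 0 := sub_ne_zero.mpr (Finset.ne_of_mem_erase hu)
      field_simp
      ring
    · intro x hx; rfl
  rw [h1, Finset.sum_erase_eq_sub (Finset.mem_univ (1 : F)),
    quadraticChar_sum_zero hF, map_one]
  ring

/-- `∑ x, χ(x*x) = q - 1`. -/
lemma aux_sum_quadChar_sq :
    ∑ x : F, quadraticChar F (x * x) = (Fintype.card F : ℤ) - 1 := by
  have : ∀ x : F, quadraticChar F (x * x) = if x = 0 then 0 else 1 := by
    intro x
    by_cases hx : x = 0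
    · simp [hx]
    · simp only [hx, if_false, ← sq]
      exact quadraticChar_sq_one' hx
  simp only [this]
  have h2 : (∑ x : F, if x = 0 then (0:ℤ) else 1)
      = ∑ x : F, ((1:ℤ) - if x = 0 then 1 else 0) := by
    refine Finset.sum_congr rfl fun x _ => ?_
    split <;> ring
  rw [h2, Finset.sum_sub_distrib, Finset.sum_const,
    Finset.sum_ite_eq' Finset.univ (0 : F) (fun _ => (1:ℤ))]
  simp [Finset.card_univ]

end Aux

/-- Arithmetic endgame. -/
lemma aux_arith (K P : ℤ) (hk1z : 1 ≤ K) (hple : P ≤ K ^ 2 + K + 1)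
    (hnn : 0 ≤ K * (P - K) - K ^ 3) (hCS : (K ^ 2) ^ 2 ≤ (P - K) * (K * (P - K) - K ^ 3)) :
    K = 1 := by
  have hstep : K * (P - K) - K ^ 3 ≤ K := by
    nlinarith [mul_le_mul_of_nonneg_left (show P - K - K ^ 2 ≤ 1 by linarith)
      (show (0 : ℤ) ≤ K by linarith)]
  have hPK : P - K ≤ K ^ 2 + 1 := by linarith
  have h4 : K ^ 4 ≤ (K ^ 2 + 1) * K := by
    calc K ^ 4 = (K ^ 2) ^ 2 := by ring
      _ ≤ (P - K) * (K * (P - K) - K ^ 3) := hCS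
      _ ≤ (K ^ 2 + 1) * K := mul_le_mul hPK hstep hnn (by positivity)
  have hle : K ≤ 1 := by
    by_contra hcon
    push_neg at hcon
    have h2le : (2 : ℤ) ≤ K := by omega
    have e5 : 2 * K ^ 3 ≤ K ^ 4 := by
      nlinarith [h2le, pow_nonneg (show (0 : ℤ) ≤ K by linarith) 3]
    have e6 : 2 * K ≤ K ^ 2 := by nlinarith [h2le]
    have e7 : 2 * K ^ 2 ≤ K ^ 3 := by nlinarith [h2le, sq_nonneg K]
    linarith
  linarith

lemma aux_R3 : (Finset.univ.filter (fun a : ZMod 3 => a ≠ 0 ∧ ∃ y, y ^ 2 = a)) =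
    ({1} : Finset (ZMod 3)) := by decide

lemma aux_two : ∀ x : ZMod 3, x + x = 1 → x = 2 := by decide

/-- If A + A equals the set of nonzero quadratic residues then p = 3 and A = {2}. -/
theorem sumset_eq_residues (p : ℕ) [Fact p.Prime] (A : Finset (ZMod p))
    (h : A + A = Finset.univ.filter (fun a : ZMod p => a ≠ 0 ∧ ∃ y, y ^ 2 = a)) :
    p = 3 ∧ A = {2} := by
  have hp : p.Prime := Fact.out
  rcases hp.eq_two_or_odd' with h2 | hodd
  · subst h2
    exfalso
    rcases Finset.eq_empty_or_nonempty A with rfl | ⟨a, ha⟩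
    · have h1 : (1 : ZMod 2) ∈ Finset.univ.filter
          (fun a : ZMod 2 => a ≠ 0 ∧ ∃ y, y ^ 2 = a) := by
        refine Finset.mem_filter.mpr ⟨Finset.mem_univ _, one_ne_zero, 1, one_pow 2⟩
      rw [← h] at h1
      obtain ⟨x, hx, -⟩ := Finset.mem_add.mp h1
      exact Finset.notMem_empty x hx
    · have haa : a + a = 0 := CharTwo.add_self_eq_zero a
      have h0 : (0 : ZMod 2) ∈ A + A := haa ▸ Finset.add_mem_add ha ha
      rw [h] at h0
      rw [Finset.mem_filter] at h0
      exact h0.2.1 rfl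
  · have hp2 : p ≠ 2 := by rintro rfl; rw [Nat.odd_iff] at hodd; omega
    have hF : ringChar (ZMod p) ≠ 2 := by
      rw [ZMod.ringChar_zmod_n]; exact hp2
    have hcard : Fintype.card (ZMod p) = p := ZMod.card p
    set R : Finset (ZMod p) :=
      Finset.univ.filter (fun a : ZMod p => a ≠ 0 ∧ ∃ y, y ^ 2 = a) with hRdef
    set k := A.card with hk
    -- χ = 1 on R
    have hchiR : ∀ a ∈ R, quadraticChar (ZMod p) a = 1 := by
      intro a ha
      rw [hRdef, Finset.mem_filter] at ha
      obtain ⟨-, ha0, y, hy⟩ := ha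
      exact (quadraticChar_one_iff_isSquare ha0).mpr ⟨y, by rw [← hy]; ring⟩
    -- 2 * |R| = p - 1
    have key : ∀ a ∈ (Finset.univ : Finset (ZMod p)).erase 0,
        quadraticChar (ZMod p) a + 1 = if a ∈ R then 2 else 0 := by
      intro a ha
      have ha0 : a ≠ 0 := Finset.ne_of_mem_erase ha
      by_cases haR : a ∈ R
      · rw [if_pos haR, hchiR a haR]; norm_num
      · rw [if_neg haR]
        have hneg : quadraticChar (ZMod p) a = -1 := by
          rcases quadraticChar_dichotomy ha0 with h1 | h1
          · exfalso
            apply haR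
            rw [hRdef, Finset.mem_filter]
            refine ⟨Finset.mem_univ _, ha0, ?_⟩
            obtain ⟨y, hy⟩ := (quadraticChar_one_iff_isSquare ha0).mp h1
            exact ⟨y, by rw [hy]; ring⟩
          · exact h1
        rw [hneg]; ring
    have e1 : ((Finset.univ : Finset (ZMod p)).erase 0).filter (· ∈ R) = R := by
      ext a
      simp only [Finset.mem_filter, Finset.mem_erase, Finset.mem_univ, true_and, hRdef]
      tauto
    have e2 : ∑ a ∈ (Finset.univ : Finset (ZMod p)).erase 0,
        (quadraticChar (ZMod p) a + 1) = 2 * (R.card : ℤ) := by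
      rw [Finset.sum_congr rfl key, ← Finset.sum_filter, e1, Finset.sum_const]
      push_cast; ring
    have e3 : ∑ a ∈ (Finset.univ : Finset (ZMod p)).erase 0,
        (quadraticChar (ZMod p) a + 1) = (p : ℤ) - 1 := by
      rw [Finset.sum_add_distrib, Finset.sum_const,
        Finset.sum_erase_eq_sub (Finset.mem_univ (0 : ZMod p)),
        quadraticChar_sum_zero hF, Finset.card_erase_of_mem (Finset.mem_univ _),
        Finset.card_univ, hcard, quadraticChar_zero]
      have : 1 ≤ p := hp.one_lt.le
      push_cast [Nat.cast_sub this, nsmul_eq_mul]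
      omega
    have hRcard : 2 * (R.card : ℤ) = (p : ℤ) - 1 := by rw [← e2, e3]
    -- |A+A| ≤ k(k+1)/2
    have hsub : A + A ⊆ A.sym2.image
        (Sym2.lift ⟨fun a b => a + b, fun a b => add_comm a b⟩) := by
      intro x hx
      rw [Finset.mem_add] at hx
      obtain ⟨a, ha, b, hb, rfl⟩ := hx
      exact Finset.mem_image.mpr ⟨s(a, b), Finset.mk_mem_sym2_iff.mpr ⟨ha, hb⟩, rfl⟩
    have htri : 2 * (A + A).card ≤ k * (k + 1) := by
      have h1 := Finset.card_le_card hsub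
      have h2 := Finset.card_image_le (s := A.sym2)
        (f := Sym2.lift ⟨fun a b => a + b, fun a b => add_comm a b⟩)
      rw [Finset.card_sym2] at h2
      have h3 : 2 * ((k + 1).choose 2) = (k + 1) * k := by
        rw [Nat.choose_two_right]
        refine Nat.mul_div_cancel' ?_
        have := Nat.even_mul_succ_self k
        rw [Nat.mul_comm]
        exact this.two_dvd
      calc 2 * (A + A).card ≤ 2 * ((k + 1).choose 2) :=
            Nat.mul_le_mul_left 2 (h1.trans h2)
        _ = (k + 1) * k := h3
        _ = k * (k + 1) := Nat.mul_comm _ _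
    have hple : (p : ℤ) ≤ (k : ℤ) ^ 2 + k + 1 := by
      have hAA : (A + A).card = R.card := by rw [h]
      have : 2 * ((A + A).card : ℤ) ≤ (k : ℤ) * (k + 1) := by exact_mod_cast htri
      rw [hAA] at this
      nlinarith [hRcard]
    -- A nonempty
    have hA : A.Nonempty := by
      rcases Finset.eq_empty_or_nonempty A with rfl | h'
      · exfalso
        have h1 : (1 : ZMod p) ∈ R := by
          rw [hRdef, Finset.mem_filter]
          exact ⟨Finset.mem_univ _, one_ne_zero, 1, one_pow 2⟩
        rw [← h] at h1
        simp [Finset.mem_add] at h1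
      · exact h'
    have hk1 : 1 ≤ k := Finset.card_pos.mpr hA
    -- the character sums
    set S : ZMod p → ℤ := fun a => ∑ b ∈ A, quadraticChar (ZMod p) (a + b) with hSdef
    have hSA : ∀ a ∈ A, S a = (k : ℤ) := by
      intro a ha
      have : ∀ b ∈ A, quadraticChar (ZMod p) (a + b) = 1 := fun b hb =>
        hchiR _ (h ▸ Finset.add_mem_add ha hb)
      rw [hSdef]
      simp only []
      rw [Finset.sum_congr rfl this, Finset.sum_const, nsmul_eq_mul, mul_one]
    have hStot : ∑ a : ZMod p, S a = 0 := by
      rw [hSdef]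
      rw [Finset.sum_comm]
      refine Finset.sum_eq_zero fun b _ => ?_
      have := Fintype.sum_equiv (Equiv.addRight b)
        (fun a : ZMod p => quadraticChar (ZMod p) (a + b))
        (fun x : ZMod p => quadraticChar (ZMod p) x) (fun a => rfl)
      rw [this, quadraticChar_sum_zero hF]
    have inner : ∀ b b' : ZMod p, ∑ a : ZMod p,
        quadraticChar (ZMod p) (a + b) * quadraticChar (ZMod p) (a + b')
        = if b = b' then (p : ℤ) - 1 else -1 := by
      intro b b'
      have h1 : ∑ a : ZMod p,
          quadraticChar (ZMod p) (a + b) * quadraticChar (ZMod p) (a + b')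
          = ∑ x : ZMod p, quadraticChar (ZMod p) x *
              quadraticChar (ZMod p) (x + (b' - b)) := by
        refine Fintype.sum_equiv (Equiv.addRight b) _ _ fun a => ?_
        have : a + b + (b' - b) = a + b' := by ring
        simp only [Equiv.coe_addRight, this]
      by_cases hbb : b = b'
      · subst hbb
        rw [if_pos rfl, h1]
        simp only [sub_self, add_zero, ← map_mul]
        rw [aux_sum_quadChar_sq, hcard]
      · rw [if_neg hbb, h1]
        have hc : b' - b ≠ 0 := sub_ne_zero.mpr (Ne.symm hbb)
        simp only [← map_mul]
        exact aux_sum_quadChar_shift hF hc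
    have hSsq : ∑ a : ZMod p, (S a) ^ 2 = (k : ℤ) * ((p : ℤ) - k) := by
      have expand : ∀ a : ZMod p, (S a) ^ 2 = ∑ b ∈ A, ∑ b' ∈ A,
          quadraticChar (ZMod p) (a + b) * quadraticChar (ZMod p) (a + b') := by
        intro a
        rw [hSdef]
        simp only []
        rw [sq, Finset.sum_mul_sum]
      calc ∑ a : ZMod p, (S a) ^ 2
          = ∑ a : ZMod p, ∑ b ∈ A, ∑ b' ∈ A,
            quadraticChar (ZMod p) (a + b) * quadraticChar (ZMod p) (a + b') :=
            Finset.sum_congr rfl fun a _ => expand a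
        _ = ∑ b ∈ A, ∑ a : ZMod p, ∑ b' ∈ A,
            quadraticChar (ZMod p) (a + b) * quadraticChar (ZMod p) (a + b') :=
            Finset.sum_comm
        _ = ∑ b ∈ A, ∑ b' ∈ A, ∑ a : ZMod p,
            quadraticChar (ZMod p) (a + b) * quadraticChar (ZMod p) (a + b') :=
            Finset.sum_congr rfl fun b _ => Finset.sum_comm
        _ = ∑ b ∈ A, ∑ b' ∈ A, (if b = b' then (p : ℤ) - 1 else -1) :=
            Finset.sum_congr rfl fun b _ => Finset.sum_congr rfl fun b' _ => inner b b'
        _ = ∑ b ∈ A, ((p : ℤ) - k) := by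
            refine Finset.sum_congr rfl fun b hb => ?_
            have step : ∀ b' ∈ A, (if b = b' then (p : ℤ) - 1 else -1)
                = (if b = b' then (p : ℤ) else 0) - 1 := by
              intro b' _; split <;> ring
            rw [Finset.sum_congr rfl step, Finset.sum_sub_distrib,
              Finset.sum_ite_eq A b (fun _ => (p : ℤ)), if_pos hb, Finset.sum_const]
            push_cast; ring
        _ = (k : ℤ) * ((p : ℤ) - k) := by rw [Finset.sum_const]; push_cast; ring
    -- restrict to the complement
    have hsplit1 : ∑ a ∈ Aᶜ, S a = -(k : ℤ) ^ 2 := by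
      have h0 := Finset.sum_add_sum_compl A S
      rw [hStot, Finset.sum_congr rfl hSA, Finset.sum_const, nsmul_eq_mul] at h0
      have hAk : ((A.card : ℤ)) = (k : ℤ) := rfl
      rw [hAk] at h0
      linear_combination h0
    have hsplit2 : ∑ a ∈ Aᶜ, (S a) ^ 2 = (k : ℤ) * ((p : ℤ) - k) - (k : ℤ) ^ 3 := by
      have := Finset.sum_add_sum_compl A (fun a => (S a) ^ 2)
      rw [hSsq] at this
      have hA2 : ∑ a ∈ A, (S a) ^ 2 = (k : ℤ) ^ 3 := by
        rw [Finset.sum_congr rfl (fun a ha => by rw [hSA a ha]), Finset.sum_const,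
          nsmul_eq_mul]
        have hAk : ((A.card : ℤ)) = (k : ℤ) := rfl
        rw [hAk]; ring
      rw [hA2] at this
      linarith
    have hnn : (0 : ℤ) ≤ (k : ℤ) * ((p : ℤ) - k) - (k : ℤ) ^ 3 := by
      rw [← hsplit2]
      exact Finset.sum_nonneg fun a _ => sq_nonneg _
    have hCS : ((k : ℤ) ^ 2) ^ 2 ≤ ((p : ℤ) - k) * ((k : ℤ) * ((p : ℤ) - k) - (k : ℤ) ^ 3) := by
      have := sq_sum_le_card_mul_sum_sq (s := Aᶜ) (f := S)
      rw [hsplit1, hsplit2] at this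
      have hcc : ((Aᶜ.card : ℤ)) = (p : ℤ) - k := by
        have hle : A.card ≤ p := le_trans (Finset.card_le_univ A) (le_of_eq hcard)
        rw [Finset.card_compl, hcard]
        push_cast [Nat.cast_sub hle]
        rfl
      rw [hcc] at this
      calc ((k : ℤ) ^ 2) ^ 2 = (-(k : ℤ) ^ 2) ^ 2 := by ring
        _ ≤ _ := this
    -- conclude k = 1 and p = 3
    have hkp : (k : ℤ) ≤ (p : ℤ) := by
      have : k ≤ p := le_trans (Finset.card_le_univ A) (le_of_eq hcard)
      exact_mod_cast this
    have hk1' : (k : ℤ) = 1 := by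
      have hk1z : (1 : ℤ) ≤ (k : ℤ) := by exact_mod_cast hk1
      exact aux_arith (k : ℤ) (p : ℤ) hk1z hple hnn hCS
    have hkk : k = 1 := by exact_mod_cast hk1'
    have hp3 : p = 3 := by
      have h3 : 3 ≤ p := by
        have := hp.two_le
        omega
      have : (p : ℤ) ≤ 3 := by rw [hk1'] at hple; linarith [hple]
      have : p ≤ 3 := by exact_mod_cast this
      omega
    subst hp3
    refine ⟨rfl, ?_⟩
    obtain ⟨a, ha⟩ := Finset.card_eq_one.mp hkk
    rw [ha] at h ⊢
    rw [Finset.singleton_add_singleton] at h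
    rw [hRdef] at h
    rw [aux_R3] at h
    have haa : a + a = 1 := Finset.singleton_injective h
    rw [aux_two a haa]
end

section
/- Let p be a prime, R ⊆ F_p the set of nonzero quadratic residues, and A, B ⊆ F_p nonempty sets with A + B ⊆ R. Let a = |A|, b = |B|. Then p + ab/p ≥ ab + a + b. -/
open Pointwise

open Finset in
private lemma quadChar_shift_sum (p : ℕ) [Fact p.Prime] (hp : p ≠ 2) (d : ZMod p)
    (hd : d ≠ 0) :
    ∑ x : ZMod p, quadraticChar (ZMod p) x * quadraticChar (ZMod p) (x + d) = -1 := by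
  have hchar : ringChar (ZMod p) ≠ 2 := by
    rw [ZMod.ringChar_zmod_n]; exact hp
  set χ := quadraticChar (ZMod p) with hχ
  have h0 : ∑ x : ZMod p, χ x * χ (x + d)
      = ∑ x ∈ Finset.univ.erase (0 : ZMod p), χ x * χ (x + d) := by
    rw [← Finset.sum_erase_add _ _ (Finset.mem_univ (0 : ZMod p))]
    simp only [hχ, quadraticChar_zero, zero_mul, add_zero]
  have h1 : ∀ x ∈ Finset.univ.erase (0 : ZMod p),
      χ x * χ (x + d) = χ (1 + d * x⁻¹) := by
    intro x hx
    have hx0 : x ≠ 0 := (Finset.mem_erase.mp hx).1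
    have : x * (x + d) = x ^ 2 * (1 + d * x⁻¹) := by
      field_simp
    rw [← map_mul, this, map_mul, quadraticChar_sq_one' hx0, one_mul]
  rw [h0, Finset.sum_congr rfl h1]
  have h2 : ∑ x ∈ Finset.univ.erase (0 : ZMod p), χ (1 + d * x⁻¹)
      = ∑ t ∈ Finset.univ.erase (1 : ZMod p), χ t := by
    apply Finset.sum_nbij' (i := fun x => 1 + d * x⁻¹) (j := fun t => d * (t - 1)⁻¹)
    · intro x hx
      have hx0 : x ≠ 0 := (Finset.mem_erase.mp hx).1
      simp only [Finset.mem_erase, Finset.mem_univ, and_true]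
      intro hcon
      have : d * x⁻¹ = 0 := by linear_combination hcon
      rcases mul_eq_zero.mp this with h | h
      · exact hd h
      · exact hx0 (inv_eq_zero.mp h)
    · intro t ht
      have ht1 : t ≠ 1 := (Finset.mem_erase.mp ht).1
      simp only [Finset.mem_erase, Finset.mem_univ, and_true]
      intro hcon
      rcases mul_eq_zero.mp hcon with h | h
      · exact hd h
      · exact ht1 (by
          have := inv_eq_zero.mp h
          linear_combination this)
    · intro x hx
      have hx0 : x ≠ 0 := (Finset.mem_erase.mp hx).1
      have hdx : d * x⁻¹ ≠ 0 := by
        simp [hd, hx0]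
      field_simp
      simp [hd]
    · intro t ht
      have ht1 : t ≠ 1 := (Finset.mem_erase.mp ht).1
      have ht1' : t - 1 ≠ 0 := sub_ne_zero.mpr ht1
      field_simp
      ring
    · intro x hx; rfl
  rw [h2]
  have h3 : ∑ t ∈ Finset.univ.erase (1 : ZMod p), χ t + χ 1 = 0 := by
    rw [Finset.sum_erase_add _ _ (Finset.mem_univ (1 : ZMod p))]
    exact quadraticChar_sum_zero hchar
  have h4 : χ 1 = 1 := map_one χ
  omega

/-- If A + B ⊆ R then p + ab/p ≥ ab + a + b. -/
theorem sumset_in_residues_ineq (p : ℕ) [Fact p.Prime] (hp : p ≠ 2)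
    (A B : Finset (ZMod p)) (hA : A.Nonempty) (hB : B.Nonempty)
    (h : A + B ⊆ Finset.univ.filter (fun a : ZMod p => a ≠ 0 ∧ ∃ y, y ^ 2 = a)) :
    (p : ℝ) + (A.card : ℝ) * B.card / p ≥ (A.card : ℝ) * B.card + A.card + B.card := by
  have hchar : ringChar (ZMod p) ≠ 2 := by
    rw [ZMod.ringChar_zmod_n]; exact hp
  set χ := quadraticChar (ZMod p) with hχ
  set S : ZMod p → ℤ := fun x => ∑ a ∈ A, χ (a + x) with hS
  -- values on B
  have hSB : ∀ x ∈ B, S x = (A.card : ℤ) := by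
    intro x hx
    have : ∀ a ∈ A, χ (a + x) = 1 := by
      intro a ha
      have hmem := h (Finset.add_mem_add ha hx)
      rw [Finset.mem_filter] at hmem
      obtain ⟨-, hne, y, hy⟩ := hmem
      rw [hχ, quadraticChar_one_iff_isSquare hne]
      exact ⟨y, by rw [← hy]; ring⟩
    simp [hS, Finset.sum_congr rfl this]
  -- total sum is zero
  have htot : ∑ x : ZMod p, S x = 0 := by
    rw [hS, Finset.sum_comm]
    apply Finset.sum_eq_zero
    intro a _
    have : ∑ x : ZMod p, χ (a + x) = ∑ y : ZMod p, χ y :=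
      Fintype.sum_equiv (Equiv.addLeft a) _ _ (fun x => rfl)
    rw [this]; exact quadraticChar_sum_zero hchar
  -- key pair sums
  have hpair : ∀ a a' : ZMod p,
      ∑ x : ZMod p, χ (a + x) * χ (a' + x) = if a = a' then (p : ℤ) - 1 else -1 := by
    intro a a'
    by_cases haa : a = a'
    · subst haa
      simp only [if_pos rfl]
      have h1 : ∑ x : ZMod p, χ (a + x) * χ (a + x) = ∑ y : ZMod p, χ y * χ y :=
        Fintype.sum_equiv (Equiv.addLeft a) _ _ (fun x => rfl)
      rw [h1]
      have h2 : ∀ y ∈ Finset.univ.erase (0 : ZMod p), χ y * χ y = 1 := by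
        intro y hy
        have := quadraticChar_sq_one (F := ZMod p) (Finset.mem_erase.mp hy).1
        rwa [sq] at this
      rw [← Finset.sum_erase_add _ _ (Finset.mem_univ (0 : ZMod p)),
        Finset.sum_congr rfl h2]
      simp only [hχ, quadraticChar_zero, mul_zero, add_zero, Finset.sum_const,
        nsmul_eq_mul, mul_one]
      rw [Finset.card_erase_of_mem (Finset.mem_univ _)]
      have hcard : Fintype.card (ZMod p) = p := ZMod.card p
      have hp1 : 1 ≤ p := (Fact.out : p.Prime).one_lt.le
      simp [hcard, Nat.cast_sub hp1]
    · simp only [if_neg haa]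
      have hd : a' - a ≠ 0 := sub_ne_zero.mpr (Ne.symm haa)
      have h1 : ∑ x : ZMod p, χ (a + x) * χ (a' + x)
          = ∑ y : ZMod p, χ y * χ (y + (a' - a)) := by
        apply Fintype.sum_equiv (Equiv.addLeft a)
        intro x
        show χ (a + x) * χ (a' + x) = χ (a + x) * χ ((a + x) + (a' - a))
        have e : a' + x = a + x + (a' - a) := by ring
        rw [e]
      rw [h1]
      exact quadChar_shift_sum p hp _ hd
  -- sum of squares
  have hsq : ∑ x : ZMod p, S x ^ 2 = (A.card : ℤ) * ((p : ℤ) - A.card) := by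
    have h1 : ∀ x : ZMod p, S x ^ 2 = ∑ a ∈ A, ∑ a' ∈ A, χ (a + x) * χ (a' + x) := by
      intro x
      rw [hS, sq, Finset.sum_mul_sum]
    calc ∑ x : ZMod p, S x ^ 2
        = ∑ a ∈ A, ∑ a' ∈ A, ∑ x : ZMod p, χ (a + x) * χ (a' + x) := by
          rw [Finset.sum_congr rfl (fun x _ => h1 x), Finset.sum_comm]
          exact Finset.sum_congr rfl (fun a _ => Finset.sum_comm)
      _ = ∑ a ∈ A, ∑ a' ∈ A, (if a = a' then (p : ℤ) - 1 else -1) :=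
          Finset.sum_congr rfl fun a _ => Finset.sum_congr rfl fun a' _ => hpair a a'
      _ = (A.card : ℤ) * ((p : ℤ) - A.card) := by
          have h2 : ∀ a ∈ A, ∑ a' ∈ A, (if a = a' then (p : ℤ) - 1 else -1)
              = (p : ℤ) - A.card := by
            intro a ha
            have : ∀ a' ∈ A, (if a = a' then (p : ℤ) - 1 else -1)
                = (if a = a' then (p : ℤ) else 0) + (-1) := by
              intro a' _
              by_cases hh : a = a' <;> simp [hh] <;> ring
            rw [Finset.sum_congr rfl this, Finset.sum_add_distrib,
              Finset.sum_ite_eq A a (fun _ => (p : ℤ)), if_pos ha]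
            simp only [Finset.sum_const, nsmul_eq_mul, mul_neg, mul_one]
            ring
          rw [Finset.sum_congr rfl h2]
          simp [mul_comm]
          ring
  -- complement sums
  have hBsum : ∑ x ∈ B, S x = (A.card : ℤ) * B.card := by
    rw [Finset.sum_congr rfl hSB]; simp [mul_comm]
  have hBsq : ∑ x ∈ B, S x ^ 2 = (A.card : ℤ) ^ 2 * B.card := by
    have : ∀ x ∈ B, S x ^ 2 = (A.card : ℤ) ^ 2 := fun x hx => by rw [hSB x hx]
    rw [Finset.sum_congr rfl this]; simp [mul_comm]
  have hcsum : ∑ x ∈ Bᶜ, S x = -((A.card : ℤ) * B.card) := by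
    have := Finset.sum_compl_add_sum B S
    omega
  have hcsq : ∑ x ∈ Bᶜ, S x ^ 2
      = (A.card : ℤ) * ((p : ℤ) - A.card) - (A.card : ℤ) ^ 2 * B.card := by
    have := Finset.sum_compl_add_sum B (fun x => S x ^ 2)
    omega
  -- Cauchy-Schwarz
  have hCS := sq_sum_le_card_mul_sum_sq (s := Bᶜ) (f := S)
  have hble : B.card ≤ p := by
    have := B.card_le_univ
    simpa [ZMod.card p] using this
  have hccard : ((Bᶜ : Finset (ZMod p)).card : ℤ) = (p : ℤ) - B.card := by
    rw [Finset.card_compl]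
    simp [ZMod.card p, Nat.cast_sub hble]
  rw [hcsum, hcsq, hccard] at hCS
  -- derive the integer inequality a*b*p ≤ (p-a)*(p-b)
  have ha1 : (1 : ℤ) ≤ A.card := by exact_mod_cast hA.card_pos
  have hb1 : (1 : ℤ) ≤ B.card := by exact_mod_cast hB.card_pos
  have hkey : (A.card : ℤ) * B.card * p ≤ ((p : ℤ) - A.card) * ((p : ℤ) - B.card) := by
    nlinarith [hCS, ha1, hb1, sq_nonneg ((A.card : ℤ) * B.card)]
  -- conclude over ℝ
  have hkeyR : (A.card : ℝ) * B.card * p ≤ ((p : ℝ) - A.card) * ((p : ℝ) - B.card) := by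
    exact_mod_cast hkey
  have hppos : (0 : ℝ) < p := by
    exact_mod_cast (Fact.out : p.Prime).pos
  rw [ge_iff_le, ← sub_nonneg]
  have hdiv : (A.card : ℝ) * B.card / p * p = (A.card : ℝ) * B.card :=
    div_mul_cancel₀ _ (ne_of_gt hppos)
  nlinarith [hkeyR, hppos, hdiv]
end

section
/- Let p be an odd prime, R the set of nonzero quadratic residues, N the nonresidues. If A, B ⊆ F_p are nonempty with A + B ⊆ R, then |A|·|B| < p. -/
open Pointwise

open Finset in
/-- Key character sum: `∑ x, χ(x) χ(x+c) = -1` for `c ≠ 0`. -/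
lemma quadChar_sum_shift (p : ℕ) [Fact p.Prime] (hp : p ≠ 2) (c : ZMod p) (hc : c ≠ 0) :
    ∑ x : ZMod p, quadraticChar (ZMod p) x * quadraticChar (ZMod p) (x + c) = -1 := by
  have hchar : ringChar (ZMod p) ≠ 2 := by
    rw [ZMod.ringChar_zmod_n]; exact hp
  set χ := quadraticChar (ZMod p) with hχ
  have h0 : ∑ x : ZMod p, χ x * χ (x + c)
      = ∑ x ∈ univ.erase (0 : ZMod p), χ x * χ (x + c) := by
    have hz : χ (0 : ZMod p) * χ ((0 : ZMod p) + c) = 0 := by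
      simp [hχ]
    rw [← Finset.sum_erase_add _ _ (mem_univ (0 : ZMod p)), hz, add_zero]
  have h1 : ∀ x ∈ univ.erase (0 : ZMod p), χ x * χ (x + c) = χ (1 + c * x⁻¹) := by
    intro x hx
    have hx0 : x ≠ 0 := by simpa using (Finset.mem_erase.mp hx).1
    have : x + c = x * (1 + c * x⁻¹) := by
      field_simp
    rw [this, map_mul, ← mul_assoc, ← pow_two, quadraticChar_sq_one hx0, one_mul]
  have h2 : ∑ x ∈ univ.erase (0 : ZMod p), χ (1 + c * x⁻¹)
      = ∑ y ∈ univ.erase (1 : ZMod p), χ y := by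
    refine Finset.sum_nbij' (fun x ↦ 1 + c * x⁻¹) (fun y ↦ c * (y - 1)⁻¹) ?_ ?_ ?_ ?_ ?_
    · intro x hx
      have hx0 : x ≠ 0 := by simpa using (Finset.mem_erase.mp hx).1
      simp only [mem_erase, mem_univ, and_true]
      intro hy
      have : c * x⁻¹ = 0 := by linear_combination hy
      rcases mul_eq_zero.mp this with h | h
      · exact hc h
      · exact hx0 (by simpa using inv_eq_zero.mp h)
    · intro y hy
      have hy1 : y ≠ 1 := by simpa using (Finset.mem_erase.mp hy).1
      simp only [mem_erase, mem_univ, and_true]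
      intro hx
      rcases mul_eq_zero.mp hx with h | h
      · exact hc h
      · exact hy1 (by have := inv_eq_zero.mp h; rw [sub_eq_zero] at this; exact this)
    · intro x hx
      have hx0 : x ≠ 0 := by simpa using (Finset.mem_erase.mp hx).1
      have hcx : c * x⁻¹ ≠ 0 := mul_ne_zero hc (inv_ne_zero hx0)
      field_simp
      simp [hc]
    · intro y hy
      have hy1 : y ≠ 1 := by simpa using (Finset.mem_erase.mp hy).1
      have hy1' : y - 1 ≠ 0 := sub_ne_zero.mpr hy1
      field_simp
      ring
    · intro x hx; rfl
  have h3 : ∑ y ∈ univ.erase (1 : ZMod p), χ y = -1 := by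
    have h := quadraticChar_sum_zero hchar
    rw [← Finset.sum_erase_add _ _ (mem_univ (1 : ZMod p))] at h
    have hχ1 : χ (1 : ZMod p) = 1 := by simpa using map_one χ
    rw [hχ1] at h
    linarith
  rw [h0, Finset.sum_congr rfl h1, h2, h3]

/-- If A + B ⊆ R then |A||B| < p. -/
theorem sumset_in_residues_card (p : ℕ) [Fact p.Prime] (hp : p ≠ 2)
    (A B : Finset (ZMod p)) (hA : A.Nonempty) (hB : B.Nonempty)
    (h : A + B ⊆ Finset.univ.filter (fun a : ZMod p => a ≠ 0 ∧ ∃ y, y ^ 2 = a)) :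
    A.card * B.card < p := by
  classical
  have hchar : ringChar (ZMod p) ≠ 2 := by
    rw [ZMod.ringChar_zmod_n]; exact hp
  set χ := quadraticChar (ZMod p) with hχ
  -- every element of A + B has character value 1
  have hone : ∀ a ∈ A, ∀ b ∈ B, χ (a + b) = 1 := by
    intro a ha b hb
    have hmem := h (Finset.add_mem_add ha hb)
    rw [Finset.mem_filter] at hmem
    obtain ⟨-, hne, y, hy⟩ := hmem
    rw [hχ, quadraticChar_one_iff_isSquare hne]
    exact ⟨y, by rw [← hy]; ring⟩
  have hS : ∑ a ∈ A, (∑ b ∈ B, χ (a + b)) = (A.card : ℤ) * B.card := by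
    rw [Finset.sum_congr rfl fun a ha => Finset.sum_congr rfl fun b hb => hone a ha b hb]
    simp [mul_comm]
  have hCS : ((A.card : ℤ) * B.card) ^ 2 ≤
      (A.card : ℤ) * ∑ a ∈ A, (∑ b ∈ B, χ (a + b)) ^ 2 := by
    rw [← hS]
    exact sq_sum_le_card_mul_sum_sq
  have hext : ∑ a ∈ A, (∑ b ∈ B, χ (a + b)) ^ 2 ≤
      ∑ x : ZMod p, (∑ b ∈ B, χ (x + b)) ^ 2 :=
    Finset.sum_le_sum_of_subset_of_nonneg (Finset.subset_univ A) fun x _ _ => sq_nonneg _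
  -- inner character sums
  have hdiag : ∀ b : ZMod p, ∑ x : ZMod p, χ (x + b) * χ (x + b) = (p : ℤ) - 1 := by
    intro b
    have he : ∑ x : ZMod p, χ (x + b) * χ (x + b) = ∑ x : ZMod p, χ x * χ x :=
      Equiv.sum_comp (Equiv.addRight b) (fun y => χ y * χ y)
    rw [he]
    have h1 : ∀ x : ZMod p, χ x * χ x = if x = 0 then 0 else 1 := by
      intro x
      split
      · simp [hχ, *]
      · rw [← sq]; exact quadraticChar_sq_one (by assumption)
    rw [Finset.sum_congr rfl fun x _ => h1 x]
    have h2 : ∀ x : ZMod p, (if x = 0 then (0:ℤ) else 1) = 1 - (if x = 0 then 1 else 0) := by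
      intro x; split <;> ring
    rw [Finset.sum_congr rfl fun x _ => h2 x, Finset.sum_sub_distrib, Finset.sum_const,
      Finset.sum_ite_eq' Finset.univ (0 : ZMod p) (fun _ => (1:ℤ))]
    simp [ZMod.card]
  have hoff : ∀ b b' : ZMod p, b ≠ b' →
      ∑ x : ZMod p, χ (x + b) * χ (x + b') = -1 := by
    intro b b' hbb
    have he : ∑ x : ZMod p, χ (x + b) * χ (x + b')
        = ∑ y : ZMod p, χ y * χ (y + (b' - b)) := by
      rw [← Equiv.sum_comp (Equiv.addRight b) (fun y => χ y * χ (y + (b' - b)))]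
      refine Finset.sum_congr rfl fun x _ => ?_
      simp only [Equiv.coe_addRight]
      ring_nf
    rw [he]
    exact quadChar_sum_shift p hp (b' - b) (sub_ne_zero.mpr (Ne.symm hbb))
  have htot : ∑ x : ZMod p, (∑ b ∈ B, χ (x + b)) ^ 2 = (B.card : ℤ) * ((p : ℤ) - B.card) := by
    have hexp : ∀ x : ZMod p, (∑ b ∈ B, χ (x + b)) ^ 2
        = ∑ b ∈ B, ∑ b' ∈ B, χ (x + b) * χ (x + b') := by
      intro x; rw [sq, Finset.sum_mul_sum]
    rw [Finset.sum_congr rfl fun x _ => hexp x, Finset.sum_comm]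
    have step1 : ∀ b ∈ B, ∑ x : ZMod p, ∑ b' ∈ B, χ (x + b) * χ (x + b')
        = (p : ℤ) - B.card := by
      intro b hb
      rw [Finset.sum_comm]
      have step2 : ∀ b' ∈ B, ∑ x : ZMod p, χ (x + b) * χ (x + b')
          = (if b = b' then (p : ℤ) else 0) - 1 := by
        intro b' _
        by_cases hbb : b = b'
        · subst hbb; rw [hdiag b, if_pos rfl]
        · rw [hoff b b' hbb, if_neg hbb]; ring
      rw [Finset.sum_congr rfl step2, Finset.sum_sub_distrib, Finset.sum_ite_eq B b (fun _ => (p:ℤ)),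
        if_pos hb, Finset.sum_const]
      simp
    rw [Finset.sum_congr rfl step1, Finset.sum_const, nsmul_eq_mul]
  -- put everything together
  have hmain : ((A.card : ℤ) * B.card) ^ 2 ≤ (A.card : ℤ) * ((B.card : ℤ) * ((p : ℤ) - B.card)) := by
    calc ((A.card : ℤ) * B.card) ^ 2
        ≤ (A.card : ℤ) * ∑ a ∈ A, (∑ b ∈ B, χ (a + b)) ^ 2 := hCS
      _ ≤ (A.card : ℤ) * ((B.card : ℤ) * ((p : ℤ) - B.card)) := by
          rw [← htot]
          exact mul_le_mul_of_nonneg_left hext (by positivity)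
  have hA1 : 1 ≤ (A.card : ℤ) := by exact_mod_cast Finset.card_pos.mpr hA
  have hB1 : 1 ≤ (B.card : ℤ) := by exact_mod_cast Finset.card_pos.mpr hB
  have hfin : (A.card : ℤ) * B.card < p := by nlinarith [mul_pos (lt_of_lt_of_le zero_lt_one hA1) (lt_of_lt_of_le zero_lt_one hB1)]
  exact_mod_cast hfin
end

section
/- Let p be a prime, R the set of nonzero quadratic residues of F_p, and A ⊆ F_p a set with A − A ⊆ R ∪ {0} and |A| odd, |A| > 1. Then p ≥ |A|² + 2|A| − 2. -/
open Pointwise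

namespace DiffResOdd

variable {p : ℕ} [Fact p.Prime]

lemma p_odd (hp2 : p ≠ 2) : p % 2 = 1 :=
  Nat.odd_iff.mp ((Fact.out : p.Prime).odd_of_ne_two hp2)

lemma two_ne_zero_zmod (hp2 : p ≠ 2) : (2 : ZMod p) ≠ 0 := by
  have hpp : p.Prime := Fact.out
  intro h
  rw [show (2 : ZMod p) = ((2:ℕ) : ZMod p) by push_cast; ring,
    ZMod.natCast_eq_zero_iff 2 p] at h
  exact hp2 ((Nat.prime_dvd_prime_iff_eq hpp Nat.prime_two).mp h)

/-- the set of nonzero squares has cardinality at most `p / 2`. -/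
lemma card_sq_le (hp2 : p ≠ 2) :
    (Finset.univ.filter (fun v : ZMod p => v ≠ 0 ∧ ∃ y, y ^ 2 = v)).card ≤ p / 2 := by
  classical
  set S := (Finset.univ.filter (fun v : ZMod p => v ≠ 0 ∧ ∃ y, y ^ 2 = v)) with hS
  set U := (Finset.univ : Finset (ZMod p)).erase 0 with hU
  have hmaps : ∀ u ∈ U, u ^ 2 ∈ S := by
    intro u hu
    have hu0 : u ≠ 0 := (Finset.mem_erase.mp hu).1
    simp only [hS, Finset.mem_filter, Finset.mem_univ, true_and]
    exact ⟨pow_ne_zero 2 hu0, u, rfl⟩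
  have hcard := Finset.card_eq_sum_card_fiberwise hmaps
  have h2le : ∀ v ∈ S, 2 ≤ (U.filter (fun u => u ^ 2 = v)).card := by
    intro v hv
    simp only [hS, Finset.mem_filter, Finset.mem_univ, true_and] at hv
    obtain ⟨hv0, y, hy⟩ := hv
    have hy0 : y ≠ 0 := by rintro rfl; simp at hy; exact hv0 hy.symm
    have hyny : y ≠ -y := by
      intro h
      have h2 : (2 : ZMod p) * y = 0 := by linear_combination h
      rcases mul_eq_zero.mp h2 with h' | h'
      · exact two_ne_zero_zmod hp2 h'
      · exact hy0 h'
    have hsub : ({y, -y} : Finset (ZMod p)) ⊆ U.filter (fun u => u ^ 2 = v) := by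
      intro u hu
      simp only [Finset.mem_insert, Finset.mem_singleton] at hu
      rcases hu with rfl | rfl
      · rw [Finset.mem_filter]
        exact ⟨Finset.mem_erase.mpr ⟨hy0, Finset.mem_univ _⟩, hy⟩
      · rw [Finset.mem_filter]
        refine ⟨Finset.mem_erase.mpr ⟨neg_ne_zero.mpr hy0, Finset.mem_univ _⟩, ?_⟩
        rw [neg_pow, hy]; ring
    calc 2 = ({y, -y} : Finset (ZMod p)).card := by
              rw [Finset.card_insert_of_notMem (by simpa using hyny), Finset.card_singleton]
      _ ≤ _ := Finset.card_le_card hsub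
  have hUcard : U.card = p - 1 := by
    rw [hU, Finset.card_erase_of_mem (Finset.mem_univ 0), Finset.card_univ, ZMod.card]
  have hge : 2 * S.card ≤ p - 1 := by
    calc 2 * S.card = ∑ _v ∈ S, 2 := by rw [Finset.sum_const, smul_eq_mul, mul_comm]
      _ ≤ ∑ v ∈ S, (U.filter (fun u => u ^ 2 = v)).card := Finset.sum_le_sum h2le
      _ = U.card := hcard.symm
      _ = p - 1 := hUcard
  have := p_odd hp2
  omega

/-- Stepanov-type bound: a set of k = m+2 elements of `ZMod p` whose pairwise differences
are all nonzero squares satisfies `k*(k-2) ≤ (p-1)/2 + (k-2)`. -/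
lemma hp_lite (hp2 : p ≠ 2) (m : ℕ) (x : Fin (m + 2) → ZMod p)
    (hinj : Function.Injective x)
    (hsq : ∀ i j, i ≠ j → ∃ y : ZMod p, y ≠ 0 ∧ x i - x j = y ^ 2) :
    (m + 2) * m ≤ p / 2 + m := by
  classical
  have hpp : p.Prime := Fact.out
  set d := p / 2 with hd
  have hpd : p = 2 * d + 1 := by have := p_odd hp2; omega
  have hd1 : 1 ≤ d := by have := hpp.two_le; omega
  have hpow : ∀ i j, i ≠ j → (x i - x j) ^ d = 1 := by
    intro i j hij
    obtain ⟨y, hy0, hy⟩ := hsq i j hij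
    rw [hy, ← pow_mul, show 2 * d = p - 1 by omega]
    exact ZMod.pow_card_sub_one_eq_one hy0
  have hkd : m + 2 ≤ d + 1 := by
    have hinj2 : Function.Injective (fun i : Fin (m+1) => x i.succ - x 0) := by
      intro i j hij
      simp only [sub_left_inj] at hij
      exact Fin.succ_injective _ (hinj hij)
    have hsubset : (Finset.univ.image (fun i : Fin (m+1) => x i.succ - x 0)) ⊆
        Finset.univ.filter (fun v : ZMod p => v ≠ 0 ∧ ∃ y, y ^ 2 = v) := by
      intro v hv
      simp only [Finset.mem_image] at hv
      obtain ⟨i, -, rfl⟩ := hv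
      obtain ⟨y, hy0, hy⟩ := hsq i.succ 0 (Fin.succ_ne_zero i)
      simp only [Finset.mem_filter, Finset.mem_univ, true_and]
      exact ⟨by rw [hy]; exact pow_ne_zero 2 hy0, y, hy.symm⟩
    have h1 := Finset.card_le_card hsubset
    rw [Finset.card_image_of_injective _ hinj2, Finset.card_univ, Fintype.card_fin] at h1
    have h2 := card_sq_le hp2
    omega
  obtain ⟨c, hc0, hmom⟩ : ∃ c : Fin (m+2) → ZMod p, c ≠ 0 ∧
      ∀ r : ℕ, r ≤ m → ∑ i, c i * x i ^ r = 0 := by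
    have hcards : Fintype.card (Fin (m+1) → ZMod p) < Fintype.card (Fin (m+2) → ZMod p) := by
      rw [Fintype.card_fun, Fintype.card_fun, Fintype.card_fin, Fintype.card_fin, ZMod.card]
      exact Nat.pow_lt_pow_right hpp.one_lt (by omega)
    obtain ⟨c₁, c₂, hne, heq⟩ := Fintype.exists_ne_map_eq_of_card_lt
      (fun (c : Fin (m+2) → ZMod p) (r : Fin (m+1)) => ∑ i, c i * x i ^ (r : ℕ)) hcards
    refine ⟨fun i => c₁ i - c₂ i, ?_, ?_⟩
    · intro h
      apply hne; funext i
      have := congrFun h i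
      simpa [sub_eq_zero] using this
    · intro r hr
      have h2 := congrFun heq (⟨r, by omega⟩ : Fin (m+1))
      simp only at h2
      calc ∑ i, (c₁ i - c₂ i) * x i ^ r
          = (∑ i, c₁ i * x i ^ r) - ∑ i, c₂ i * x i ^ r := by
            rw [← Finset.sum_sub_distrib]
            exact Finset.sum_congr rfl fun i _ => by ring
        _ = 0 := by rw [h2]; ring
  obtain ⟨i₀, hi₀⟩ : ∃ i₀, c i₀ ≠ 0 := Function.ne_iff.mp hc0
  set D := d + m with hD
  set F : Polynomial (ZMod p) :=
    ∑ i, Polynomial.C (c i) * (Polynomial.X - Polynomial.C (x i)) ^ D with hF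
  have htaylor : ∀ (j : Fin (m+2)) (n : ℕ),
      ((Polynomial.taylor (x j)) F).coeff n
        = (D.choose n : ZMod p) * ∑ i, c i * (x j - x i) ^ (D - n) := by
    intro j n
    have hterm : ∀ i : Fin (m+2),
        ((Polynomial.taylor (x j))
            (Polynomial.C (c i) * (Polynomial.X - Polynomial.C (x i)) ^ D)).coeff n
          = c i * ((x j - x i) ^ (D - n) * (D.choose n : ZMod p)) := by
      intro i
      simp only [Polynomial.taylor_apply, Polynomial.mul_comp, Polynomial.pow_comp,
        Polynomial.sub_comp, Polynomial.X_comp, Polynomial.C_comp]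
      have hrw : (Polynomial.X + Polynomial.C (x j)) - Polynomial.C (x i)
          = Polynomial.X + Polynomial.C (x j - x i) := by
        rw [Polynomial.C_sub]; ring
      rw [hrw, Polynomial.coeff_C_mul, Polynomial.coeff_X_add_C_pow]
    rw [hF, map_sum, Polynomial.finset_sum_coeff]
    rw [Finset.sum_congr rfl fun i _ => hterm i, Finset.mul_sum]
    exact Finset.sum_congr rfl fun i _ => by ring
  have hinner : ∀ (j : Fin (m+2)) (e : ℕ), 1 ≤ e → e ≤ m →
      ∑ i, c i * (x j - x i) ^ (d + e) = 0 := by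
    intro j e he1 hem
    have hstep : ∀ i, c i * (x j - x i) ^ (d + e) = c i * (x j - x i) ^ e := by
      intro i
      by_cases hii : i = j
      · subst hii; rw [sub_self, zero_pow (by omega), zero_pow (by omega)]
      · rw [pow_add, hpow j i (fun h => hii h.symm), one_mul]
    rw [Finset.sum_congr rfl fun i _ => hstep i]
    have hexp : ∀ i : Fin (m+2), c i * (x j - x i) ^ e
        = ∑ r ∈ Finset.range (e+1),
            ((-1)^r * (x j ^ (e - r) * (e.choose r : ZMod p))) * (c i * x i ^ r) := by
      intro i
      rw [sub_eq_add_neg, add_comm, add_pow, Finset.mul_sum]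
      refine Finset.sum_congr rfl fun r hr => ?_
      rw [neg_pow]
      ring
    rw [Finset.sum_congr rfl fun i _ => hexp i, Finset.sum_comm]
    apply Finset.sum_eq_zero
    intro r hr
    rw [← Finset.mul_sum, hmom r (by have := Finset.mem_range.mp hr; omega), mul_zero]
  have hsum_d : ∀ j, ∑ i, c i * (x j - x i) ^ d = - c j := by
    intro j
    have hstep : ∀ i, c i * (x j - x i) ^ d = c i - (if i = j then c j else 0) := by
      intro i
      by_cases hii : i = j
      · subst hii; rw [sub_self, zero_pow (by omega)]; simp
      · rw [hpow j i (fun h => hii h.symm), mul_one, if_neg hii, sub_zero]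
    rw [Finset.sum_congr rfl fun i _ => hstep i, Finset.sum_sub_distrib]
    have h0 := hmom 0 (by omega)
    simp only [pow_zero, mul_one] at h0
    rw [h0, Finset.sum_ite_eq' Finset.univ j (fun _ => c j), if_pos (Finset.mem_univ j)]
    ring
  have hchoose : (D.choose m : ZMod p) ≠ 0 := by
    rw [Ne, ZMod.natCast_eq_zero_iff]
    intro hdvd
    have hmD : m ≤ D := by omega
    have hfac : p ∣ D.factorial := by
      rw [← Nat.choose_mul_factorial_mul_factorial hmD]
      exact Dvd.dvd.mul_right (Dvd.dvd.mul_right hdvd _) _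
    have := (Nat.Prime.dvd_factorial hpp).mp hfac
    omega
  have hcoeffm : ((Polynomial.taylor (x i₀)) F).coeff m
      = (D.choose m : ZMod p) * (- c i₀) := by
    rw [htaylor i₀ m, show D - m = d by omega, hsum_d i₀]
  have hFne : F ≠ 0 := by
    intro h
    rw [h, map_zero, Polynomial.coeff_zero] at hcoeffm
    exact (mul_ne_zero hchoose (neg_ne_zero.mpr hi₀)) hcoeffm.symm
  have hdvd : ∀ j : Fin (m+2), (Polynomial.X - Polynomial.C (x j)) ^ m ∣ F := by
    intro j
    have hX : (Polynomial.X : Polynomial (ZMod p)) ^ m ∣ (Polynomial.taylor (x j)) F := by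
      rw [Polynomial.X_pow_dvd_iff]
      intro n hn
      rw [htaylor j n, show D - n = d + (m - n) by omega,
        hinner j (m - n) (by omega) (by omega), mul_zero]
    obtain ⟨g, hg⟩ := hX
    refine ⟨g.comp (Polynomial.X - Polynomial.C (x j)), ?_⟩
    have h1 : F = ((Polynomial.taylor (x j)) F).comp (Polynomial.X - Polynomial.C (x j)) := by
      rw [Polynomial.taylor_apply, Polynomial.comp_assoc]
      simp [Polynomial.add_comp]
    rw [h1, hg, Polynomial.mul_comp, Polynomial.pow_comp, Polynomial.X_comp]
  have hprod : (∏ i : Fin (m+2), (Polynomial.X - Polynomial.C (x i)) ^ m) ∣ F := by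
    apply Finset.prod_dvd_of_coprime
    · intro i _ j _ hij
      exact ((Polynomial.pairwise_coprime_X_sub_C hinj) hij).pow
    · exact fun i _ => hdvd i
  have hdegF : F.natDegree ≤ D := by
    rw [hF]
    apply Polynomial.natDegree_sum_le_of_forall_le
    intro i _
    calc (Polynomial.C (c i) * (Polynomial.X - Polynomial.C (x i)) ^ D).natDegree
        ≤ ((Polynomial.X - Polynomial.C (x i)) ^ D).natDegree :=
          Polynomial.natDegree_C_mul_le _ _
      _ ≤ D := by rw [Polynomial.natDegree_pow, Polynomial.natDegree_X_sub_C, mul_one]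
  have hdegP : (∏ i : Fin (m+2), (Polynomial.X - Polynomial.C (x i)) ^ m).natDegree
      = (m+2) * m := by
    rw [Polynomial.natDegree_prod]
    · simp [Polynomial.natDegree_pow, Polynomial.natDegree_X_sub_C]
    · intro i _; exact pow_ne_zero _ (Polynomial.X_sub_C_ne_zero _)
  have hfin := Polynomial.natDegree_le_of_dvd hprod hFne
  omega

/-- wrapper of `hp_lite` in terms of a finset. -/
lemma hp_lite' (hp2 : p ≠ 2) (A : Finset (ZMod p)) (h2 : 2 ≤ A.card)
    (hsq : ∀ a ∈ A, ∀ b ∈ A, a ≠ b → ∃ y : ZMod p, y ≠ 0 ∧ a - b = y ^ 2) :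
    A.card * (A.card - 2) ≤ p / 2 + (A.card - 2) := by
  obtain ⟨m, hm⟩ : ∃ m, A.card = m + 2 := ⟨A.card - 2, by omega⟩
  have e : Fin (m+2) ≃ {a // a ∈ A} := (finCongr hm.symm).trans A.equivFin.symm
  set x : Fin (m+2) → ZMod p := fun i => ((e i : {a // a ∈ A}) : ZMod p) with hx
  have hinj : Function.Injective x := by
    intro i j hij
    exact e.injective (Subtype.ext hij)
  have hsq' : ∀ i j, i ≠ j → ∃ y : ZMod p, y ≠ 0 ∧ x i - x j = y ^ 2 := by
    intro i j hij
    exact hsq (x i) (e i).2 (x j) (e j).2 (hinj.ne hij)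
  have h3 := hp_lite hp2 m x hinj hsq'
  rw [hm]
  simpa only [Nat.add_sub_cancel] using h3

lemma quad_residue (hp2 : p ≠ 2) (A : Finset (ZMod p)) (h2 : 2 ≤ A.card)
    (hsq : ∀ a ∈ A, ∀ b ∈ A, a ≠ b → ∃ y : ZMod p, y ≠ 0 ∧ a - b = y ^ 2) :
    p % 4 = 1 := by
  obtain ⟨a, ha, b, hb, hab⟩ := Finset.one_lt_card.mp (show 1 < A.card by omega)
  obtain ⟨y, hy0, hy⟩ := hsq a ha b hb hab
  obtain ⟨w, hw0, hw⟩ := hsq b hb a ha (Ne.symm hab)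
  have hyy : (y^2 : ZMod p) ≠ 0 := pow_ne_zero 2 hy0
  have hw2 : (w^2 : ZMod p) = -(y^2) := by linear_combination - hw - hy
  have hsqneg : ((w * y⁻¹) * (w * y⁻¹) : ZMod p) = -1 := by
    have h1 : ((w * y⁻¹) * (w * y⁻¹) : ZMod p) = w^2 * (y^2)⁻¹ := by
      rw [← inv_pow]; ring
    rw [h1, hw2, neg_mul, mul_inv_cancel₀ hyy]
  have h34 : p % 4 ≠ 3 := ZMod.exists_sq_eq_neg_one_iff.mp ⟨w * y⁻¹, hsqneg.symm⟩
  have := p_odd hp2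
  omega

lemma normalize (A : Finset (ZMod p)) (h2 : 2 ≤ A.card)
    (hsq : ∀ a ∈ A, ∀ b ∈ A, a ≠ b → ∃ y : ZMod p, y ≠ 0 ∧ a - b = y ^ 2) :
    ∃ B : Finset (ZMod p), B.card = A.card ∧ (0 : ZMod p) ∈ B ∧ (1 : ZMod p) ∈ B ∧
      ∀ a ∈ B, ∀ b ∈ B, a ≠ b → ∃ y : ZMod p, y ≠ 0 ∧ a - b = y ^ 2 := by
  classical
  obtain ⟨a₀, ha₀, a₁, ha₁, hne⟩ := Finset.one_lt_card.mp (show 1 < A.card by omega)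
  obtain ⟨y, hy0, hy⟩ := hsq a₁ ha₁ a₀ ha₀ (Ne.symm hne)
  have hyinv : (y⁻¹ : ZMod p) ≠ 0 := inv_ne_zero hy0
  set f : ZMod p → ZMod p := fun u => (u - a₀) * (y⁻¹) ^ 2 with hf
  have hfinj : Function.Injective f := by
    intro u v huv
    simp only [hf] at huv
    have h1 := mul_right_cancel₀ (pow_ne_zero 2 hyinv) huv
    exact sub_left_inj.mp h1
  refine ⟨A.image f, Finset.card_image_of_injective _ hfinj, ?_, ?_, ?_⟩
  · exact Finset.mem_image.mpr ⟨a₀, ha₀, by simp [hf]⟩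
  · refine Finset.mem_image.mpr ⟨a₁, ha₁, ?_⟩
    simp only [hf]
    rw [hy, ← mul_pow, mul_inv_cancel₀ hy0, one_pow]
  · intro u' hu' v' hv' huv'
    obtain ⟨u, hu, rfl⟩ := Finset.mem_image.mp hu'
    obtain ⟨v, hv, rfl⟩ := Finset.mem_image.mp hv'
    have huvne : u ≠ v := fun h => huv' (by rw [h])
    obtain ⟨w, hw0, hw⟩ := hsq u hu v hv huvne
    refine ⟨w * y⁻¹, mul_ne_zero hw0 hyinv, ?_⟩
    simp only [hf]
    rw [mul_pow, ← hw]
    ring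

def Q29l : List (ZMod 29) := [1,4,5,6,7,9,13,16,20,22,23,24,25,28]
def Q5l : List (ZMod 5) := [1,4]

set_option maxHeartbeats 1000000 in
lemma bridge29 : ∀ v w : ZMod 29, w ≠ 0 → v = w^2 → v ∈ Q29l := by decide

lemma bridge5 : ∀ v w : ZMod 5, w ≠ 0 → v = w^2 → v ∈ Q5l := by decide

lemma L5 : ∀ x : ZMod 5, x ∈ Q5l → (x - 1) ∈ Q5l → False := by decide

set_option maxHeartbeats 4000000 in
lemma L29 : ∀ x : ZMod 29, x ∈ Q29l → (x - 1) ∈ Q29l →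
    ∀ y : ZMod 29, y ∈ Q29l → (y - 1) ∈ Q29l → (y - x) ∈ Q29l →
    ∀ z : ZMod 29, z ∈ Q29l → (z - 1) ∈ Q29l → (z - x) ∈ Q29l → (z - y) ∈ Q29l → False := by
  decide

lemma no29 (A : Finset (ZMod 29)) (hcard : A.card = 5)
    (hsq : ∀ a ∈ A, ∀ b ∈ A, a ≠ b → ∃ y : ZMod 29, y ≠ 0 ∧ a - b = y ^ 2) : False := by
  classical
  haveI : Fact (Nat.Prime 29) := ⟨by norm_num⟩
  obtain ⟨B, hBcard, h0B, h1B, hsqB⟩ := normalize A (show 2 ≤ A.card by omega) hsq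
  rw [hcard] at hBcard
  have h01 : (0 : ZMod 29) ≠ 1 := zero_ne_one
  set C := (B.erase 1).erase 0 with hC
  have hCcard : C.card = 3 := by
    rw [hC, Finset.card_erase_of_mem (Finset.mem_erase.mpr ⟨h01, h0B⟩),
      Finset.card_erase_of_mem h1B, hBcard]
  obtain ⟨u, v, w, huv, huw, hvw, hCeq⟩ := Finset.card_eq_three.mp hCcard
  have hmem : ∀ t ∈ C, t ∈ B ∧ t ≠ 0 ∧ t ≠ 1 := by
    intro t ht
    rw [hC] at ht
    have h1 := Finset.mem_erase.mp ht
    have h2 := Finset.mem_erase.mp h1.2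
    exact ⟨h2.2, h1.1, h2.1⟩
  have hu := hmem u (by rw [hCeq]; simp)
  have hv := hmem v (by rw [hCeq]; simp)
  have hw := hmem w (by rw [hCeq]; simp)
  have key : ∀ a ∈ B, ∀ b ∈ B, a ≠ b → (a - b) ∈ Q29l := by
    intro a ha b hb hab
    obtain ⟨yy, hy0', hy'⟩ := hsqB a ha b hb hab
    exact bridge29 _ yy hy0' hy'
  have k1 : u ∈ Q29l := by
    have := key u hu.1 0 h0B hu.2.1
    simpa using this
  have k2 : (u - 1) ∈ Q29l := key u hu.1 1 h1B hu.2.2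
  have k3 : v ∈ Q29l := by
    have := key v hv.1 0 h0B hv.2.1
    simpa using this
  have k4 : (v - 1) ∈ Q29l := key v hv.1 1 h1B hv.2.2
  have k5 : (v - u) ∈ Q29l := key v hv.1 u hu.1 (Ne.symm huv)
  have k6 : w ∈ Q29l := by
    have := key w hw.1 0 h0B hw.2.1
    simpa using this
  have k7 : (w - 1) ∈ Q29l := key w hw.1 1 h1B hw.2.2
  have k8 : (w - u) ∈ Q29l := key w hw.1 u hu.1 (Ne.symm huw)
  have k9 : (w - v) ∈ Q29l := key w hw.1 v hv.1 (Ne.symm hvw)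
  exact L29 u k1 k2 v k3 k4 k5 w k6 k7 k8 k9

lemma no5 (A : Finset (ZMod 5)) (hcard : A.card = 3)
    (hsq : ∀ a ∈ A, ∀ b ∈ A, a ≠ b → ∃ y : ZMod 5, y ≠ 0 ∧ a - b = y ^ 2) : False := by
  classical
  haveI : Fact (Nat.Prime 5) := ⟨by norm_num⟩
  obtain ⟨B, hBcard, h0B, h1B, hsqB⟩ := normalize A (show 2 ≤ A.card by omega) hsq
  rw [hcard] at hBcard
  have h01 : (0 : ZMod 5) ≠ 1 := zero_ne_one
  set C := (B.erase 1).erase 0 with hC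
  have hCcard : C.card = 1 := by
    rw [hC, Finset.card_erase_of_mem (Finset.mem_erase.mpr ⟨h01, h0B⟩),
      Finset.card_erase_of_mem h1B, hBcard]
  obtain ⟨u, hCeq⟩ := Finset.card_eq_one.mp hCcard
  have hut : u ∈ C := by rw [hCeq]; simp
  rw [hC] at hut
  have h1 := Finset.mem_erase.mp hut
  have h2 := Finset.mem_erase.mp h1.2
  have key : ∀ a ∈ B, ∀ b ∈ B, a ≠ b → (a - b) ∈ Q5l := by
    intro a ha b hb hab
    obtain ⟨yy, hy0', hy'⟩ := hsqB a ha b hb hab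
    exact bridge5 _ yy hy0' hy'
  have k1 : u ∈ Q5l := by
    have := key u h2.2 0 h0B h1.1
    simpa using this
  have k2 : (u - 1) ∈ Q5l := key u h2.2 1 h1B h2.1
  exact L5 u k1 k2

end DiffResOdd

open DiffResOdd in
/-- If A − A ⊆ R ∪ {0}, |A| odd and |A| > 1, then p ≥ |A|² + 2|A| − 2. -/
theorem diff_in_residues_odd (p : ℕ) [Fact p.Prime]
    (A : Finset (ZMod p))
    (h : A - A ⊆ insert 0 (Finset.univ.filter (fun a : ZMod p => a ≠ 0 ∧ ∃ y, y ^ 2 = a)))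
    (hA : Odd A.card) (hA1 : 1 < A.card) :
    (p : ℤ) ≥ (A.card : ℤ) ^ 2 + 2 * A.card - 2 := by
  classical
  have hpp : p.Prime := Fact.out
  have hsq : ∀ a ∈ A, ∀ b ∈ A, a ≠ b → ∃ y : ZMod p, y ≠ 0 ∧ a - b = y ^ 2 := by
    intro a ha b hb hab
    have hmem := h (Finset.sub_mem_sub ha hb)
    rw [Finset.mem_insert] at hmem
    rcases hmem with h0 | hmem
    · exact absurd h0 (sub_ne_zero_of_ne hab)
    · rw [Finset.mem_filter] at hmem
      obtain ⟨-, hne, y, hy⟩ := hmem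
      have hy0 : y ≠ 0 := by rintro rfl; exact hne (by rw [← hy]; simp)
      exact ⟨y, hy0, hy.symm⟩
  have hk3 : 3 ≤ A.card := by
    have := Nat.odd_iff.mp hA; omega
  have hp2 : p ≠ 2 := by
    rintro rfl
    have hle := Finset.card_le_univ A
    rw [ZMod.card] at hle
    omega
  have hq := quad_residue hp2 A (show 2 ≤ A.card by omega) hsq
  have hodd := p_odd hp2
  have hcases : A.card = 3 ∨ A.card = 5 ∨ 7 ≤ A.card := by
    have := Nat.odd_iff.mp hA; omega
  rw [ge_iff_le]
  rcases hcases with h3 | h5 | h7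
  · -- k = 3 : show 13 ≤ p
    have hp5 : p ≠ 5 := by
      rintro rfl
      exact no5 A h3 hsq
    have h13 : 13 ≤ p := by
      by_contra hlt
      push_neg at hlt
      have h2le := hpp.two_le
      interval_cases p <;>
        first
          | omega
          | (exact hp5 rfl)
          | (exact absurd hpp (by norm_num))
    rw [h3]
    push_cast
    omega
  · -- k = 5 : show 33 ≤ p
    have h1 := hp_lite' hp2 A (show 2 ≤ A.card by omega) hsq
    rw [h5] at h1
    have hp25 : 25 ≤ p := by omega
    have hp29 : p ≠ 29 := by
      rintro rfl
      exact no29 A h5 hsq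
    have h33 : 33 ≤ p := by
      by_contra hlt
      push_neg at hlt
      interval_cases p <;>
        first
          | omega
          | (exact hp29 rfl)
          | (exact absurd hpp (by norm_num))
    rw [h5]
    push_cast
    omega
  · -- k ≥ 7
    have h1 := hp_lite' hp2 A (show 2 ≤ A.card by omega) hsq
    obtain ⟨t, ht⟩ : ∃ t, A.card = t + 2 := ⟨A.card - 2, by omega⟩
    rw [ht] at h1 ⊢
    simp only [Nat.add_sub_cancel] at h1
    have ht5 : 5 ≤ t := by omega
    have hpd : p = 2 * (p / 2) + 1 := by omega
    have hz1 : ((t : ℤ) + 2) * t ≤ (p / 2 : ℕ) + t := by exact_mod_cast h1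
    have hz2 : (p : ℤ) = 2 * ((p / 2 : ℕ) : ℤ) + 1 := by exact_mod_cast hpd
    have hz5 : (5 : ℤ) ≤ t := by exact_mod_cast ht5
    push_cast
    nlinarith [mul_nonneg (by linarith : (0:ℤ) ≤ (t:ℤ) - 5) (by linarith : (0:ℤ) ≤ (t:ℤ) + 1)]
end

section
/- Let p be a prime and suppose A ⊆ F_p is a 1-perfect difference set (i.e., for every nonzero x, the number of pairs (a,a') ∈ A×A with a' − a = x equals 1) with A +̂ A = R, the set of nonzero quadratic residues, where A +̂ A is the restricted sumset over distinct pairs. Then (A +̂ A) ∩ (2·A) = ∅, where 2·A = {2a : a ∈ A}; consequently R ∩ 2·A = ∅ and either A ⊆ R ∪ {0} or A ⊆ N (the set of nonresidues). -/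
/-- If A is a 1-perfect difference set with A +̂ A = R, then (A +̂ A) ∩ 2·A = ∅,
hence R ∩ 2·A = ∅ and either A ⊆ R ∪ {0} or A ⊆ N. -/
theorem pds_restricted_sumset_structure (p : ℕ) [Fact p.Prime]
    (A : Finset (ZMod p))
    (hPDS : ∀ x : ZMod p, x ≠ 0 →
      ((A ×ˢ A).filter (fun q : ZMod p × ZMod p => q.2 - q.1 = x)).card = 1)
    (h : ((A ×ˢ A).filter (fun q : ZMod p × ZMod p => q.1 ≠ q.2)).image
            (fun q : ZMod p × ZMod p => q.1 + q.2)
          = Finset.univ.filter (fun a : ZMod p => a ≠ 0 ∧ ∃ y, y ^ 2 = a)) :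
    (((A ×ˢ A).filter (fun q : ZMod p × ZMod p => q.1 ≠ q.2)).image
          (fun q : ZMod p × ZMod p => q.1 + q.2)
        ∩ A.image (fun a => 2 * a) = ∅)
    ∧ (Finset.univ.filter (fun a : ZMod p => a ≠ 0 ∧ ∃ y, y ^ 2 = a))
        ∩ A.image (fun a => 2 * a) = ∅
    ∧ (A ⊆ insert 0 (Finset.univ.filter (fun a : ZMod p => a ≠ 0 ∧ ∃ y, y ^ 2 = a))
        ∨ A ⊆ Finset.univ.filter (fun a : ZMod p => a ≠ 0 ∧ ∀ y : ZMod p, y ^ 2 ≠ a)) := by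
  classical
  have h1 : (((A ×ˢ A).filter (fun q : ZMod p × ZMod p => q.1 ≠ q.2)).image
          (fun q : ZMod p × ZMod p => q.1 + q.2)
        ∩ A.image (fun a => 2 * a) = ∅) := by
    rw [Finset.eq_empty_iff_forall_notMem]
    intro s hs
    rw [Finset.mem_inter, Finset.mem_image, Finset.mem_image] at hs
    obtain ⟨⟨q, hq, hsum⟩, ⟨b, hb, h2b⟩⟩ := hs
    rw [Finset.mem_filter, Finset.mem_product] at hq
    obtain ⟨⟨ha, ha'⟩, hne⟩ := hq
    obtain ⟨a, a'⟩ := q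
    simp only at ha ha' hne hsum
    have key : a + a' = 2 * b := by rw [hsum, h2b]
    have hx : b - a ≠ 0 := by
      intro h0
      apply hne
      have hba : b = a := by linear_combination h0
      linear_combination -key - 2 * hba
    have hcard := hPDS (b - a) hx
    have habne : (a, b) ≠ (b, a') := by
      intro hEq
      apply hx
      rw [Prod.mk.injEq] at hEq
      linear_combination - hEq.1
    have hsub : ({(a, b), (b, a')} : Finset (ZMod p × ZMod p)) ⊆
        (A ×ˢ A).filter (fun q : ZMod p × ZMod p => q.2 - q.1 = b - a) := by
      intro q hq
      rw [Finset.mem_insert, Finset.mem_singleton] at hq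
      rcases hq with rfl | rfl
      · simp [Finset.mem_filter, Finset.mem_product, ha, hb]
      · simp only [Finset.mem_filter, Finset.mem_product]
        refine ⟨⟨hb, ha'⟩, ?_⟩
        linear_combination key
    have h2le : 2 ≤ ((A ×ˢ A).filter
        (fun q : ZMod p × ZMod p => q.2 - q.1 = b - a)).card := by
      calc 2 = ({(a, b), (b, a')} : Finset (ZMod p × ZMod p)).card := by
              rw [Finset.card_insert_of_notMem (by simpa using habne),
                Finset.card_singleton]
        _ ≤ _ := Finset.card_le_card hsub
    omega
  have h2 : (Finset.univ.filter (fun a : ZMod p => a ≠ 0 ∧ ∃ y, y ^ 2 = a))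
        ∩ A.image (fun a => 2 * a) = ∅ := by rw [← h]; exact h1
  refine ⟨h1, h2, ?_⟩
  -- key consequence of h2 : for nonzero c ∈ A, 2*c is not a square (given 2 ≠ 0)
  have hns : ∀ c ∈ A, c ≠ 0 → (2 : ZMod p) ≠ 0 → ¬ IsSquare (2 * c) := by
    intro c hc hc0 h20 hsq
    have hmem : 2 * c ∈ (Finset.univ.filter
        (fun a : ZMod p => a ≠ 0 ∧ ∃ y, y ^ 2 = a)) ∩ A.image (fun a => 2 * a) := by
      rw [Finset.mem_inter, Finset.mem_filter, Finset.mem_image]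
      obtain ⟨r, hr⟩ := hsq
      exact ⟨⟨Finset.mem_univ _, mul_ne_zero h20 hc0, ⟨r, by rw [sq]; exact hr.symm⟩⟩,
        ⟨c, hc, rfl⟩⟩
    rw [h2] at hmem
    exact absurd hmem (Finset.notMem_empty _)
  by_cases hex : ∃ a ∈ A, a ≠ 0 ∧ ¬ IsSquare a
  · right
    obtain ⟨a₀, ha₀, ha₀0, ha₀sq⟩ := hex
    have h20 : (2 : ZMod p) ≠ 0 := by
      intro h2z
      apply ha₀sq
      apply FiniteField.isSquare_of_char_two
      have hp2 : p = 2 := by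
        have := (ZMod.natCast_eq_zero_iff 2 p).mp (by exact_mod_cast h2z)
        have := (Nat.prime_dvd_prime_iff_eq (Fact.out : p.Prime) Nat.prime_two).mp this
        exact this
      rw [ZMod.ringChar_zmod_n, hp2]
    have hzero : (0 : ZMod p) ∉ A := by
      intro h0A
      have : a₀ ∈ ((A ×ˢ A).filter (fun q : ZMod p × ZMod p => q.1 ≠ q.2)).image
          (fun q : ZMod p × ZMod p => q.1 + q.2) := by
        rw [Finset.mem_image]
        exact ⟨(0, a₀), by simp [Finset.mem_filter, Finset.mem_product, h0A, ha₀,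
          Ne.symm ha₀0], by simp⟩
      rw [h, Finset.mem_filter] at this
      obtain ⟨-, -, y, hy⟩ := this
      exact ha₀sq ⟨y, by rw [← hy, sq]⟩
    intro b hbA
    have hb0 : b ≠ 0 := fun hb => hzero (hb ▸ hbA)
    rw [Finset.mem_filter]
    refine ⟨Finset.mem_univ _, hb0, ?_⟩
    -- quadratic character argument
    have hχa₀ : quadraticChar (ZMod p) (2 * a₀) = -1 :=
      (quadraticChar_neg_one_iff_not_isSquare).mpr (hns a₀ ha₀ ha₀0 h20)
    have hχb : quadraticChar (ZMod p) (2 * b) = -1 :=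
      (quadraticChar_neg_one_iff_not_isSquare).mpr (hns b hbA hb0 h20)
    rw [map_mul] at hχa₀ hχb
    have hχ2 : quadraticChar (ZMod p) 2 ≠ 0 := fun hz => h20 (quadraticChar_eq_zero_iff.mp hz)
    have hbb : quadraticChar (ZMod p) b = quadraticChar (ZMod p) a₀ :=
      mul_left_cancel₀ hχ2 (hχb.trans hχa₀.symm)
    have : quadraticChar (ZMod p) b = -1 := by
      rw [hbb]
      exact (quadraticChar_neg_one_iff_not_isSquare).mpr ha₀sq
    have hbns : ¬ IsSquare b := (quadraticChar_neg_one_iff_not_isSquare).mp this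
    intro y hy
    exact hbns ⟨y, by rw [← hy, sq]⟩
  · left
    push_neg at hex
    intro a haA
    rcases eq_or_ne a 0 with rfl | ha0
    · exact Finset.mem_insert_self _ _
    · obtain ⟨r, hr⟩ := hex a haA ha0
      exact Finset.mem_insert_of_mem (Finset.mem_filter.mpr
        ⟨Finset.mem_univ _, ha0, ⟨r, by rw [sq]; exact hr.symm⟩⟩)
end
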